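/- arXiv:0804.4019 — 9 statements merged into one kernel-verified Lean document; each statement's English description precedes it below -/
import Mathlib

section
/- Let G be a group of permutations of a set A and let (F,T) be an extended set type for G acting on A which has the cover property. Then for every finite subset B of A with F not contained in B, the set T \ ⋃{g(T) : g ∈ G, g(F) ⊆ B} is infinite. -/
/-- `(F, T)` is an extended set type for the set `H` of permutations of `A` acting on
`A`: `F` is finite, `T` is nonempty, disjoint from `F`, and is a union of equivalence
classes of the relation `a ~ b` iff some `h ∈ H` with `h(F) = F` (setwise) maps `a`
to `b` (each such class being disjoint from `F`). -/
def IsExtendedSetType {A : Type*} (H : Set (Equiv.Perm A)) (F T : Set A) : Prop :=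
  F.Finite ∧ T.Nonempty ∧ Disjoint F T ∧
    ∀ a ∈ T, ∀ h ∈ H, (h : Equiv.Perm A) '' F = F → h a ∈ T

/-- The extended set type `(F, T)` has the cover property: for every finite set `H'`
of elements `h` of `H` with `h(F) ≠ F`, the set `T \ ⋃_{h ∈ H'} h(T)` is infinite. -/
def HasCoverProperty {A : Type*} (H : Set (Equiv.Perm A)) (F T : Set A) : Prop :=
  ∀ H' : Finset (Equiv.Perm A),
    (∀ h ∈ H', h ∈ H ∧ (h : Equiv.Perm A) '' F ≠ F) →
    (T \ ⋃ h ∈ H', (h : Equiv.Perm A) '' T).Infinite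

/-! Only finitely many sets `g(F) ⊆ B` occur, so choose finitely many representatives
`r ∈ G` realising them; each has `r(F) ⊆ B`, hence `r(F) ≠ F`. If `g(F) = r(F)` then `r⁻¹g`
stabilises `F` setwise, so it maps `T` into `T` and `g(T) ⊆ r(T)`. The union in question is
therefore contained in a finite union to which the cover property applies. -/

open Equiv

theorem Equiv.Perm.image_subset_image_of_image_eq {A : Type*} {G : Subgroup (Perm A)}
    {F T : Set A} (hT : ∀ a ∈ T, ∀ h ∈ G, h '' F = F → h a ∈ T)
    {g r : Perm A} (hg : g ∈ G) (hr : r ∈ G) (hgr : g '' F = r '' F) : g '' T ⊆ r '' T := by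
  have hstab : (r⁻¹ * g) '' F = F := by
    rw [Perm.coe_mul, Set.image_comp, hgr, ← Set.image_comp, ← Perm.coe_mul, inv_mul_cancel,
      Perm.coe_one, Set.image_id]
  rintro _ ⟨a, ha, rfl⟩
  exact ⟨(r⁻¹ * g) a, hT a ha _ (mul_mem (inv_mem hr) hg) hstab, by simp⟩

theorem Set.exists_finite_subset_image_eq {α β : Type*} {s : Set α} {f : α → β}
    (hs : (f '' s).Finite) : ∃ u ⊆ s, u.Finite ∧ f '' u = f '' s := by
  obtain ⟨u, hus, hbij⟩ := Set.exists_subset_bijOn s f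
  exact ⟨u, hus, Set.Finite.of_finite_image (hbij.image_eq ▸ hs) hbij.injOn, hbij.image_eq⟩

/-- if `(F,T)` is an extended set type for `G` acting on `A` with the
cover property, then for every finite `B ⊆ A` not containing `F`, the set
`T \ ⋃ {g(T) : g ∈ G, g(F) ⊆ B}` is infinite. -/
theorem extended_set_type_cover
    {A : Type*} (G : Subgroup (Equiv.Perm A)) (F T : Set A)
    (hext : IsExtendedSetType (G : Set (Equiv.Perm A)) F T)
    (hcov : HasCoverProperty (G : Set (Equiv.Perm A)) F T)
    (B : Set A) (hB : B.Finite) (hFB : ¬ F ⊆ B) :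
    (T \ ⋃ g ∈ {g : Equiv.Perm A | g ∈ G ∧ (g : Equiv.Perm A) '' F ⊆ B},
      (g : Equiv.Perm A) '' T).Infinite := by
  set S := {g : Perm A | g ∈ G ∧ g '' F ⊆ B}
  have hfin : ((fun g : Perm A ↦ g '' F) '' S).Finite :=
    hB.finite_subsets.subset (Set.image_subset_iff.2 fun g hg ↦ hg.2)
  obtain ⟨R, hRS, hRfin, hRimage⟩ := Set.exists_finite_subset_image_eq hfin
  have hR : ∀ r ∈ hRfin.toFinset, r ∈ (G : Set (Perm A)) ∧ r '' F ≠ F := fun r hr ↦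
    have hr := hRS (hRfin.mem_toFinset.1 hr)
    ⟨hr.1, fun h ↦ hFB (h ▸ hr.2)⟩
  refine (hcov _ hR).mono (Set.sdiff_subset_sdiff_right ?_)
  refine Set.iUnion₂_subset fun g hg ↦ ?_
  obtain ⟨r, hr, hrg⟩ : ∃ r ∈ R, r '' F = g '' F := by
    rw [← Set.mem_image, hRimage]; exact Set.mem_image_of_mem _ hg
  exact (Perm.image_subset_image_of_image_eq hext.2.2.2 hg.1 (hRS hr).1 hrg.symm).trans
    (Set.subset_biUnion_of_mem (u := fun r : Perm A ↦ r '' T) (hRfin.mem_toFinset.2 hr))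
end

section
/- For all m, n ≥ 1, the distinguishing number of the graph m·Kₙ (the disjoint union of m copies of the complete graph on n vertices, i.e., the simple graph on Fin m × Fin n in which (i,a) is adjacent to (j,b) iff i = j and a ≠ b) equals the least k ∈ ℕ such that the binomial coefficient C(k,n) ≥ m. -/
/-!
A colouring of `m·Kₙ` is distinguishing exactly when it is injective on every copy and
different copies receive different colour sets: a repeated colour inside a copy is undone by a
transposition within that copy, two copies with the same colour set are interchanged by an
automorphism matching equal colours, and conversely every automorphism permutes the copies and
acts on each by a bijection, which such a colouring pins down. Such colourings with `k` colours
are the same as `m` distinct `n`-subsets of the `k` colours, so they exist iff `m ≤ C(k, n)`.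
-/

/-- The graph `m·Kₙ`: the disjoint union of `m` copies of the complete graph `Kₙ`,
realized on the vertex set `Fin m × Fin n`, where `(i,a)` is adjacent to `(j,b)`
iff `i = j` and `a ≠ b`. -/
def mCopiesKn (m n : ℕ) : SimpleGraph (Fin m × Fin n) where
  Adj x y := x.1 = y.1 ∧ x.2 ≠ y.2
  symm := ⟨fun x y ⟨h1, h2⟩ => ⟨h1.symm, h2.symm⟩⟩
  loopless := ⟨fun x ⟨_, h⟩ => h rfl⟩

open Function

namespace SimpleGraph

def IsDistinguishing {V κ : Type*} (G : SimpleGraph V) (c : V → κ) : Prop :=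
  ∀ g : G ≃g G, (∀ v, c (g v) = c v) → ∀ v, g v = v

end SimpleGraph

theorem exists_injective_rows_iff_card_le_choose {ι α κ : Type*} [Fintype ι] [Fintype α]
    [Fintype κ] :
    (∃ c : ι × α → κ, (∀ i, Injective fun a => c (i, a)) ∧
        Injective fun i => Set.range fun a => c (i, a)) ↔
      Fintype.card ι ≤ (Fintype.card κ).choose (Fintype.card α) := by
  rw [← Fintype.card_finset_len]
  constructor
  · rintro ⟨c, hrow, hrange⟩
    let rowSet (i : ι) : {s : Finset κ // s.card = Fintype.card α} :=
      ⟨Finset.univ.map ⟨_, hrow i⟩, by simp⟩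
    refine Fintype.card_le_of_injective rowSet fun i j hij => hrange ?_
    simpa [rowSet, ← Finset.coe_inj] using congrArg Subtype.val hij
  · intro hcard
    obtain ⟨S⟩ := Function.Embedding.nonempty_of_card_le hcard
    let e (i : ι) : α ≃ (S i).1 := Fintype.equivOfCardEq (by simp [(S i).2])
    have hrange (i : ι) : (Set.range fun a => (e i a : κ)) = (S i).1 := by
      change Set.range (Subtype.val ∘ e i) = _
      rw [EquivLike.range_comp, Subtype.range_coe_subtype]
      rfl
    refine ⟨fun v => e v.1 v.2, fun i => Subtype.val_injective.comp (e i).injective, ?_⟩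
    intro i j hij
    simp only [hrange, Finset.coe_inj] at hij
    exact S.injective (Subtype.ext hij)

namespace mCopiesKn

variable {m n : ℕ}

def shear (σ : Equiv.Perm (Fin m)) (f : Fin m → Equiv.Perm (Fin n)) :
    mCopiesKn m n ≃g mCopiesKn m n where
  toEquiv := Equiv.prodShear σ f
  map_rel_iff' {v w} := by
    obtain ⟨i, a⟩ := v
    obtain ⟨j, b⟩ := w
    change (σ i = σ j ∧ f i a ≠ f j b) ↔ (i = j ∧ a ≠ b)
    rw [σ.injective.eq_iff]
    constructor <;> rintro ⟨rfl, hne⟩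
    · exact ⟨rfl, fun h => hne (congrArg _ h)⟩
    · exact ⟨rfl, (f i).injective.ne hne⟩

@[simp]
lemma shear_apply (σ : Equiv.Perm (Fin m)) (f : Fin m → Equiv.Perm (Fin n))
    (v : Fin m × Fin n) :
    shear σ f v = (σ v.1, f v.1 v.2) := rfl

lemma fst_iso_apply_eq (g : mCopiesKn m n ≃g mCopiesKn m n) (i : Fin m) (a b : Fin n) :
    (g (i, a)).1 = (g (i, b)).1 := by
  rcases eq_or_ne a b with rfl | hab
  · rfl
  · exact (g.map_rel_iff.mpr (show (mCopiesKn m n).Adj (i, a) (i, b) from ⟨rfl, hab⟩)).1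

variable {κ : Type*} {c : Fin m × Fin n → κ}

lemma injective_row_of_isDistinguishing (hc : (mCopiesKn m n).IsDistinguishing c)
    (i : Fin m) : Injective fun a => c (i, a) := by
  intro a b hab
  by_contra hne
  let g := shear 1 (Pi.mulSingle i (Equiv.swap a b))
  have hg : ∀ v, c (g v) = c v := by
    rintro ⟨j, x⟩
    rcases eq_or_ne j i with rfl | hj
    · simpa [g] using Equiv.apply_swap_eq_self (v := fun a => c (j, a)) hab x
    · simp [g, hj]
  have hfix : b = a := by simpa [g] using hc g hg (i, a)
  exact hne hfix.symm

lemma injective_range_row_of_isDistinguishing (hn : 0 < n)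
    (hc : (mCopiesKn m n).IsDistinguishing c) :
    Injective fun i => Set.range fun a => c (i, a) := by
  intro i j hij
  by_contra hne
  have hrow := injective_row_of_isDistinguishing hc
  let π : Equiv.Perm (Fin n) := (Equiv.ofInjective _ (hrow i)).trans
    ((Equiv.setCongr hij).trans (Equiv.ofInjective _ (hrow j)).symm)
  have hπ (a : Fin n) : c (j, π a) = c (i, a) := Equiv.apply_ofInjective_symm (hrow j) _
  let g := shear (Equiv.swap i j) (update (update 1 i π) j π.symm)
  have hg : ∀ v, c (g v) = c v := by
    rintro ⟨l, x⟩
    rcases eq_or_ne l i with rfl | hli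
    · simpa [g, hne] using hπ x
    rcases eq_or_ne l j with rfl | hlj
    · simpa [g] using (hπ (π.symm x)).symm
    · simp [g, hli, hlj, Equiv.swap_apply_of_ne_of_ne]
  have hfix := congrArg Prod.fst (hc g hg (i, ⟨0, hn⟩))
  simp only [g, shear_apply, Equiv.swap_apply_left] at hfix
  exact hne hfix.symm

lemma isDistinguishing_of_injective_row (hn : 0 < n) (hrow : ∀ i, Injective fun a => c (i, a))
    (hrange : Injective fun i => Set.range fun a => c (i, a)) :
    (mCopiesKn m n).IsDistinguishing c := by
  intro g hg
  let σ (i : Fin m) : Fin m := (g (i, ⟨0, hn⟩)).1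
  let τ (i : Fin m) (a : Fin n) : Fin n := (g (i, a)).2
  have hgστ (i : Fin m) (a : Fin n) : g (i, a) = (σ i, τ i a) :=
    Prod.ext (fst_iso_apply_eq g i a _) rfl
  have hτ (i : Fin m) : Injective (τ i) := fun a b hab =>
    (Prod.mk.inj (g.injective (by rw [hgστ, hgστ, hab]))).2
  have hcτ (i : Fin m) (a : Fin n) : c (σ i, τ i a) = c (i, a) := by rw [← hgστ, hg]
  have hσ (i : Fin m) : σ i = i := hrange <| by
    calc Set.range (fun a => c (σ i, a))
        = Set.range ((fun a => c (σ i, a)) ∘ τ i) :=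
          ((Finite.surjective_of_injective (hτ i)).range_comp _).symm
      _ = Set.range (fun a => c (i, a)) := congrArg Set.range (funext (hcτ i))
  rintro ⟨i, a⟩
  have hτa : τ i a = a := hrow i (by simpa [hσ] using hcτ i a)
  rw [hgστ, hσ, hτa]

theorem isDistinguishing_iff (hn : 0 < n) :
    (mCopiesKn m n).IsDistinguishing c ↔
      (∀ i, Injective fun a => c (i, a)) ∧ Injective fun i => Set.range fun a => c (i, a) :=
  ⟨fun hc =>
      ⟨injective_row_of_isDistinguishing hc, injective_range_row_of_isDistinguishing hn hc⟩,
    fun h => isDistinguishing_of_injective_row hn h.1 h.2⟩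

end mCopiesKn

theorem distinguishing_number_mKn_general (m n : ℕ) (hn : 1 ≤ n) :
    sInf {k : ℕ | ∃ c : Fin m × Fin n → Fin k,
        ∀ g : mCopiesKn m n ≃g mCopiesKn m n,
          (∀ v, c (g v) = c v) → ∀ v, g v = v}
      = sInf {k : ℕ | m ≤ Nat.choose k n} := by
  congr 1
  ext k
  show (∃ c, (mCopiesKn m n).IsDistinguishing c) ↔ m ≤ k.choose n
  simp only [mCopiesKn.isDistinguishing_iff hn, exists_injective_rows_iff_card_le_choose,
    Fintype.card_fin]

/-- For `m, n ≥ 1`, the distinguishing number of `m·Kₙ` equals the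
least `k` such that `C(k,n) ≥ m`. -/
theorem distinguishing_number_mKn (m n : ℕ) (hm : 1 ≤ m) (hn : 1 ≤ n) :
    sInf {k : ℕ | ∃ c : Fin m × Fin n → Fin k,
        ∀ g : mCopiesKn m n ≃g mCopiesKn m n,
          (∀ v, c (g v) = c v) → ∀ v, g v = v}
      = sInf {k : ℕ | m ≤ Nat.choose k n} :=
  distinguishing_number_mKn_general m n hn
end

section
/- The distinguishing number of the linearly ordered set (ℚ, <) is infinite: for every n ∈ ℕ and every coloring c : ℚ → Fin n there exists an order automorphism g of ℚ with g ≠ id and c(g(q)) = c(q) for all q ∈ ℚ. -/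
/-!
Shrinking an interval once per color, one finds `a < b` such that every color is either dense
in `(a, b)` or absent from it. On `(a, b)` every occurring color is then dense, so a
back-and-forth argument through finite color-preserving partial isomorphisms maps any point to
any other point of the same color. An automorphism of `(a, b)` obtained this way that moves a
point, extended by the identity outside `(a, b)`, is the required automorphism of `ℚ`.
-/

open Set Order

section ColoredBackAndForth

variable {α C : Type*} [LinearOrder α] {κ : α → C}

/-- Finite partial order isomorphisms of `α` preserving the coloring `κ`, encoded as in
`Order.PartialIso` by the finite set of pairs they identify. -/
def ColoredPartialIso (κ : α → C) : Type _ :=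
  { f : Finset (α × α) //
    (∀ p ∈ f, ∀ q ∈ f, cmp p.1 q.1 = cmp p.2 q.2) ∧ ∀ p ∈ f, κ p.1 = κ p.2 }

instance : Preorder (ColoredPartialIso κ) := Subtype.preorder _

theorem exists_between_finsets_of_colorDense [NoMinOrder α] [NoMaxOrder α]
    (hκ : ∀ z x y : α, x < y → ∃ u ∈ Ioo x y, κ u = κ z) (z : α) (lo hi : Finset α)
    (lo_lt_hi : ∀ x ∈ lo, ∀ y ∈ hi, x < y) :
    ∃ m, κ m = κ z ∧ (∀ x ∈ lo, x < m) ∧ ∀ y ∈ hi, m < y := by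
  have : DenselyOrdered α := ⟨fun x y hxy => (hκ z x y hxy).imp fun _ h => h.1⟩
  have : Nonempty α := ⟨z⟩
  obtain ⟨x, lo_lt_x, x_lt_hi⟩ := exists_between_finsets lo hi lo_lt_hi
  obtain ⟨y, x_lt_y, y_lt_hi⟩ :=
    exists_between_finsets {x} hi (by simpa only [Finset.mem_singleton, forall_eq])
  obtain ⟨m, ⟨x_lt_m, m_lt_y⟩, hm⟩ := hκ z x y (x_lt_y x (Finset.mem_singleton_self x))
  exact ⟨m, hm, fun w hw => (lo_lt_x w hw).trans x_lt_m,
    fun w hw => m_lt_y.trans (y_lt_hi w hw)⟩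

namespace ColoredPartialIso

theorem exists_across [NoMinOrder α] [NoMaxOrder α]
    (hκ : ∀ z x y : α, x < y → ∃ u ∈ Ioo x y, κ u = κ z) (f : ColoredPartialIso κ) (a : α) :
    ∃ b, κ b = κ a ∧ ∀ p ∈ f.val, cmp p.1 a = cmp p.2 b := by
  by_cases h : ∃ b, (a, b) ∈ f.val
  · obtain ⟨b, hb⟩ := h
    exact ⟨b, (f.prop.2 _ hb).symm, fun p hp => f.prop.1 _ hp _ hb⟩
  have lo_lt_hi : ∀ x ∈ {p ∈ f.val | p.1 < a}.image Prod.snd,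
      ∀ y ∈ {p ∈ f.val | a < p.1}.image Prod.snd, x < y := by
    simp only [Finset.mem_image, Finset.mem_filter]
    rintro _ ⟨p, ⟨hp, hpa⟩, rfl⟩ _ ⟨q, ⟨hq, haq⟩, rfl⟩
    rw [← lt_iff_lt_of_cmp_eq_cmp (f.prop.1 _ hp _ hq)]
    exact hpa.trans haq
  obtain ⟨b, hb, lo_lt_b, b_lt_hi⟩ := exists_between_finsets_of_colorDense hκ a _ _ lo_lt_hi
  refine ⟨b, hb, fun p hp => ?_⟩
  rcases lt_or_gt_of_ne (fun he => h ⟨p.2, he ▸ hp⟩ : p.1 ≠ a) with hpa | hap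
  · have hpb := lo_lt_b _ (Finset.mem_image_of_mem _ (Finset.mem_filter.mpr ⟨hp, hpa⟩))
    rw [(cmp_eq_lt_iff _ _).mpr hpa, (cmp_eq_lt_iff _ _).mpr hpb]
  · have hbp := b_lt_hi _ (Finset.mem_image_of_mem _ (Finset.mem_filter.mpr ⟨hp, hap⟩))
    rw [(cmp_eq_gt_iff _ _).mpr hap, (cmp_eq_gt_iff _ _).mpr hbp]

def definedAtLeft [NoMinOrder α] [NoMaxOrder α]
    (hκ : ∀ z x y : α, x < y → ∃ u ∈ Ioo x y, κ u = κ z) (a : α) :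
    Cofinal (ColoredPartialIso κ) where
  carrier := {f | ∃ b, (a, b) ∈ f.val}
  isCofinal f := by
    obtain ⟨b, hb, a_b⟩ := exists_across hκ f a
    refine ⟨⟨insert (a, b) f.val, fun p hp q hq => ?_, fun p hp => ?_⟩,
      ⟨b, Finset.mem_insert_self _ _⟩, Finset.subset_insert _ _⟩
    · rw [Finset.mem_insert] at hp hq
      rcases hp with rfl | hp <;> rcases hq with rfl | hq
      · simp only [cmp_self_eq_eq]
      · rw [cmp_eq_cmp_symm]
        exact a_b _ hq
      · exact a_b _ hp
      · exact f.prop.1 _ hp _ hq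
    · rcases Finset.mem_insert.mp hp with rfl | hp
      · exact hb.symm
      · exact f.prop.2 _ hp

protected def comm (f : ColoredPartialIso κ) : ColoredPartialIso κ :=
  ⟨f.val.image Prod.swap, by
    simp only [Finset.mem_image]
    constructor
    · rintro _ ⟨p, hp, rfl⟩ _ ⟨q, hq, rfl⟩
      exact (f.prop.1 _ hp _ hq).symm
    · rintro _ ⟨p, hp, rfl⟩
      exact (f.prop.2 _ hp).symm⟩

theorem mem_comm_iff {f : ColoredPartialIso κ} {p : α × α} : p ∈ f.comm.val ↔ p.swap ∈ f.val := by
  refine ⟨fun hp => ?_, fun hp => Finset.mem_image.mpr ⟨p.swap, hp, p.swap_swap⟩⟩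
  obtain ⟨q, hq, rfl⟩ := Finset.mem_image.mp hp
  rwa [Prod.swap_swap]

def definedAtRight [NoMinOrder α] [NoMaxOrder α]
    (hκ : ∀ z x y : α, x < y → ∃ u ∈ Ioo x y, κ u = κ z) (b : α) :
    Cofinal (ColoredPartialIso κ) where
  carrier := {f | ∃ a, (a, b) ∈ f.val}
  isCofinal f := by
    obtain ⟨f', ⟨a, ha⟩, hff'⟩ := (definedAtLeft hκ b).isCofinal f.comm
    refine ⟨f'.comm, ⟨a, mem_comm_iff.mpr ha⟩, fun p hp => mem_comm_iff.mpr ?_⟩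
    exact hff' (mem_comm_iff.mpr hp)

end ColoredPartialIso

open ColoredPartialIso in
theorem exists_orderIso_apply_eq_of_colorDense [Countable α] [NoMinOrder α] [NoMaxOrder α]
    (hκ : ∀ z x y : α, x < y → ∃ u ∈ Ioo x y, κ u = κ z) {p q : α} (hpq : κ p = κ q) :
    ∃ e : α ≃o α, e p = q ∧ ∀ x, κ (e x) = κ x := by
  have := Encodable.ofCountable α
  let start : ColoredPartialIso κ := ⟨{(p, q)}, by simp [hpq]⟩
  let cofinals : α ⊕ α → Cofinal (ColoredPartialIso κ) :=
    Sum.elim (definedAtLeft hκ) (definedAtRight hκ)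
  let I := idealOfCofinals start cofinals
  have forth (a : α) : ∃ b, ∃ f ∈ I, (a, b) ∈ f.val := by
    obtain ⟨f, ⟨b, hb⟩, hf⟩ := cofinal_meets_idealOfCofinals start cofinals (.inl a)
    exact ⟨b, f, hf, hb⟩
  have back (b : α) : ∃ a, ∃ f ∈ I, (a, b) ∈ f.val := by
    obtain ⟨f, ⟨a, ha⟩, hf⟩ := cofinal_meets_idealOfCofinals start cofinals (.inr b)
    exact ⟨a, f, hf, ha⟩
  choose F hF using forth
  choose G hG using back
  have compatible {a b a' b'} {f f'} (hf : f ∈ I) (hf' : f' ∈ I)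
      (ha : (a, b) ∈ f.val) (ha' : (a', b') ∈ f'.val) : cmp a a' = cmp b b' := by
    obtain ⟨g, -, hfg, hf'g⟩ := I.directed _ hf _ hf'
    exact g.prop.1 _ (hfg ha) _ (hf'g ha')
  refine ⟨OrderIso.ofCmpEqCmp F G fun a b => ?_, ?_, fun x => ?_⟩
  · obtain ⟨f, hf, ha⟩ := hF a
    obtain ⟨f', hf', hb⟩ := hG b
    exact compatible hf hf' ha hb
  · obtain ⟨f, hf, hp⟩ := hF p
    have := compatible hf (mem_idealOfCofinals start cofinals) hp (Finset.mem_singleton_self _)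
    rw [cmp_self_eq_eq, eq_comm, cmp_eq_eq_iff] at this
    exact this
  · obtain ⟨f, -, hx⟩ := hF x
    exact (f.prop.2 _ hx).symm

theorem exists_orderIso_ne_of_colorDense [Countable α] [NoMinOrder α] [NoMaxOrder α]
    [Nonempty α] (hκ : ∀ z x y : α, x < y → ∃ u ∈ Ioo x y, κ u = κ z) :
    ∃ e : α ≃o α, (∃ x, e x ≠ x) ∧ ∀ x, κ (e x) = κ x := by
  obtain ⟨p⟩ := ‹Nonempty α›
  obtain ⟨r, hpr⟩ := exists_gt p
  obtain ⟨q, ⟨hpq, -⟩, hq⟩ := hκ p p r hpr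
  obtain ⟨e, hep, he⟩ := exists_orderIso_apply_eq_of_colorDense hκ hq.symm
  exact ⟨e, ⟨p, hep ▸ hpq.ne'⟩, he⟩

end ColoredBackAndForth

section ExtendByIdentity

variable {α : Type*} [LinearOrder α] {s : Set α}

theorem Set.OrdConnected.lt_of_mem_of_notMem (hs : s.OrdConnected) {x y z : α} (hx : x ∈ s)
    (hy : y ∉ s) (hxy : x < y) (hz : z ∈ s) : z < y :=
  lt_of_not_ge fun hyz => hy (hs.out hx hz ⟨hxy.le, hyz⟩)

theorem Set.OrdConnected.lt_of_notMem_of_mem (hs : s.OrdConnected) {x y z : α} (hx : x ∉ s)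
    (hy : y ∈ s) (hxy : x < y) (hz : z ∈ s) : x < z :=
  lt_of_not_ge fun hzx => hx (hs.out hz hy ⟨hzx, hxy.le⟩)

theorem Set.OrdConnected.exists_orderIso_extend (hs : s.OrdConnected) (e : s ≃o s) :
    ∃ g : α ≃o α, (∀ x : s, g x = e x) ∧ ∀ x ∉ s, g x = x := by
  classical
  let g := Equiv.Perm.ofSubtype e.toEquiv
  have g_mem (x : s) : g x = e x := Equiv.Perm.ofSubtype_apply_coe _ x
  have g_notMem {x : α} (hx : x ∉ s) : g x = x := Equiv.Perm.ofSubtype_apply_of_not_mem _ hx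
  have g_strictMono : StrictMono g := by
    intro x y hxy
    by_cases hx : x ∈ s <;> by_cases hy : y ∈ s
    · rw [g_mem ⟨x, hx⟩, g_mem ⟨y, hy⟩, Subtype.coe_lt_coe]
      exact e.strictMono hxy
    · rw [g_mem ⟨x, hx⟩, g_notMem hy]
      exact hs.lt_of_mem_of_notMem hx hy hxy (e ⟨x, hx⟩).2
    · rw [g_notMem hx, g_mem ⟨y, hy⟩]
      exact hs.lt_of_notMem_of_mem hx hy hxy (e ⟨y, hy⟩).2
    · rwa [g_notMem hx, g_notMem hy]
  exact ⟨g_strictMono.orderIsoOfSurjective g g.surjective, g_mem, fun x hx => g_notMem hx⟩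

end ExtendByIdentity

section DenseOrAbsent

variable {α C : Type*} [LinearOrder α]

def ColorDenseOn (κ : α → C) (i : C) (s : Set α) : Prop :=
  ∀ x ∈ s, ∀ y ∈ s, x < y → ∃ u ∈ Ioo x y, κ u = i

theorem ColorDenseOn.mono {κ : α → C} {i : C} {s t : Set α} (h : ColorDenseOn κ i s) (hts : t ⊆ s) :
    ColorDenseOn κ i t :=
  fun x hx y hy => h x (hts hx) y (hts hy)

theorem exists_Ioo_colorDenseOn_or_notMem_image [Nontrivial α] (κ : α → C) (S : Finset C) :
    ∃ a b, a < b ∧ ∀ i ∈ S, ColorDenseOn κ i (Ioo a b) ∨ i ∉ κ '' Ioo a b := by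
  classical
  induction S using Finset.induction_on with
  | empty =>
    obtain ⟨a, b, hab⟩ := exists_pair_lt α
    exact ⟨a, b, hab, by simp⟩
  | insert j S _ ih =>
    obtain ⟨a, b, hab, hS⟩ := ih
    by_cases hj : ColorDenseOn κ j (Ioo a b)
    · exact ⟨a, b, hab, Finset.forall_mem_insert _ _ _ |>.mpr ⟨.inl hj, hS⟩⟩
    obtain ⟨x, hx, y, hy, hxy, hgap⟩ : ∃ x ∈ Ioo a b, ∃ y ∈ Ioo a b, x < y ∧
        ∀ u ∈ Ioo x y, κ u ≠ j := by
      unfold ColorDenseOn at hj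
      push Not at hj
      exact hj
    have hsub : Ioo x y ⊆ Ioo a b := Ioo_subset_Ioo hx.1.le hy.2.le
    refine ⟨x, y, hxy, Finset.forall_mem_insert _ _ _ |>.mpr ⟨.inr ?_, fun i hi => ?_⟩⟩
    · rintro ⟨u, hu, rfl⟩
      exact hgap u hu rfl
    · exact (hS i hi).imp (·.mono hsub) fun hi' hi => hi' (image_mono hsub hi)

end DenseOrAbsent

/-- The distinguishing number of `(ℚ, <)` is infinite: for every `n` and
every coloring `c : ℚ → Fin n` there is a nontrivial order automorphism of `ℚ`
preserving the colors. -/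
theorem distinguishing_number_of_rationals_infinite
    (n : ℕ) (c : ℚ → Fin n) :
    ∃ g : ℚ ≃o ℚ, (∃ q, g q ≠ q) ∧ ∀ q, c (g q) = c q := by
  obtain ⟨a, b, hab, hc⟩ := exists_Ioo_colorDenseOn_or_notMem_image c Finset.univ
  have hdense : ∀ z x y : Ioo a b, x < y → ∃ u ∈ Ioo x y, c u = c z := by
    intro z x y hxy
    obtain hz | hz := hc (c z) (Finset.mem_univ _)
    · obtain ⟨u, hu, hcu⟩ := hz x x.2 y y.2 hxy
      exact ⟨⟨u, x.2.1.trans hu.1, hu.2.trans y.2.2⟩, hu, hcu⟩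
    · exact absurd ⟨z, z.2, rfl⟩ hz
  have : Nonempty (Ioo a b) := nonempty_Ioo_subtype hab
  obtain ⟨e, ⟨x, hx⟩, he⟩ := exists_orderIso_ne_of_colorDense hdense
  obtain ⟨g, hg, hg_out⟩ := ordConnected_Ioo.exists_orderIso_extend e
  refine ⟨g, ⟨x, by rwa [hg, ne_eq, Subtype.coe_inj]⟩, fun q => ?_⟩
  by_cases hq : q ∈ Ioo a b
  · exact (hg ⟨q, hq⟩).symm ▸ he ⟨q, hq⟩
  · rw [hg_out q hq]
end

section
/- Let Q₀ ⊆ ℚ be a set such that both Q₀ and its complement are dense in ℚ (between any two rationals there is an element of Q₀ and an element of ℚ\Q₀), and let the dense local order ℚ* be the tournament on ℚ in which x → y iff either x < y and (x ∈ Q₀ ↔ y ∈ Q₀), or y < x and ¬(x ∈ Q₀ ↔ y ∈ Q₀). Then the distinguishing number of ℚ* is infinite: for every n ∈ ℕ and every coloring c : ℚ → Fin n there exists a bijection g : ℚ → ℚ with g ≠ id, preserving the tournament relation (x → y iff g(x) → g(y)), and satisfying c(g(q)) = c(q) for all q. -/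
/-!
Only the order of `ℚ` and membership in `Q₀` enter the definition of `ℚ*`, so every order
automorphism of `ℚ` preserving the finite coloring `x ↦ (c x, x ∈ Q₀)` is a color-preserving
automorphism of the tournament. Choose an interval `(u, v)` on which this coloring takes the fewest
possible values; then every color occurring in `(u, v)` is dense in `(u, v)`. A back-and-forth
argument with color-preserving finite partial isomorphisms then moves a point `a` of `(u, v)` to
another point `b` of the same color, and the resulting automorphism of `(u, v)` is extended by the
identity outside the interval.
-/

open Set

namespace Order

variable {α K : Type*} [LinearOrder α]

/-- Every color that occurs is dense and unbounded, in the sense that it meets every gap between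
two finite sets. -/
def ColorClassesDense (κ : α → K) : Prop :=
  ∀ x (L U : Finset α), (∀ l ∈ L, ∀ w ∈ U, l < w) →
    ∃ y, (∀ l ∈ L, l < y) ∧ (∀ w ∈ U, y < w) ∧ κ y = κ x

def ColoredPartialIso (κ : α → K) : Type _ :=
  { f : Finset (α × α) //
    (∀ p ∈ f, ∀ q ∈ f, cmp p.1 q.1 = cmp p.2 q.2) ∧ ∀ p ∈ f, κ p.1 = κ p.2 }

namespace ColoredPartialIso

variable {κ : α → K}

instance : Preorder (ColoredPartialIso κ) := Subtype.preorder _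

def swap (f : ColoredPartialIso κ) : ColoredPartialIso κ :=
  ⟨f.val.map (Equiv.prodComm α α).toEmbedding, by
    simp only [Finset.mem_map_equiv, Equiv.prodComm_symm, Equiv.prodComm_apply, Prod.forall,
      Prod.swap_prod_mk]
    exact ⟨fun a b hab c d hcd => (f.prop.1 _ hab _ hcd).symm,
      fun a b hab => (f.prop.2 _ hab).symm⟩⟩

theorem mem_swap {f : ColoredPartialIso κ} {p : α × α} : p ∈ f.swap.val ↔ p.swap ∈ f.val :=
  Finset.mem_map_equiv

theorem exists_across (H : ColorClassesDense κ) (f : ColoredPartialIso κ) (a : α) :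
    ∃ b, κ b = κ a ∧ ∀ p ∈ f.val, cmp p.1 a = cmp p.2 b := by
  by_cases h : ∃ b, (a, b) ∈ f.val
  · obtain ⟨b, hb⟩ := h
    exact ⟨b, (f.prop.2 _ hb).symm, fun p hp => f.prop.1 _ hp _ hb⟩
  obtain ⟨b, hbL, hbU, hb⟩ := H a ({p ∈ f.val | p.1 < a}.image Prod.snd)
    ({p ∈ f.val | a < p.1}.image Prod.snd) (by
      simp only [Finset.mem_image, Finset.mem_filter]
      rintro _ ⟨p, ⟨hp, hpa⟩, rfl⟩ _ ⟨q, ⟨hq, haq⟩, rfl⟩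
      exact (lt_iff_lt_of_cmp_eq_cmp (f.prop.1 _ hp _ hq)).1 (hpa.trans haq))
  refine ⟨b, hb, fun p hp => ?_⟩
  have hpa : p.1 ≠ a := fun he => h ⟨p.2, he ▸ hp⟩
  rcases hpa.lt_or_gt with hlt | hgt
  · rw [(cmp_eq_lt_iff _ _).2 hlt,
      (cmp_eq_lt_iff _ _).2 (hbL _ (Finset.mem_image_of_mem _ (Finset.mem_filter.2 ⟨hp, hlt⟩)))]
  · rw [(cmp_eq_gt_iff _ _).2 hgt,
      (cmp_eq_gt_iff _ _).2 (hbU _ (Finset.mem_image_of_mem _ (Finset.mem_filter.2 ⟨hp, hgt⟩)))]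

def definedAtLeft (H : ColorClassesDense κ) (a : α) : Cofinal (ColoredPartialIso κ) where
  carrier := {f | ∃ b, (a, b) ∈ f.val}
  isCofinal f := by
    obtain ⟨b, hb, hab⟩ := exists_across H f a
    refine ⟨⟨insert (a, b) f.val, ?_, ?_⟩, ⟨b, Finset.mem_insert_self _ _⟩,
      Finset.subset_insert _ _⟩
    · intro p hp q hq
      rw [Finset.mem_insert] at hp hq
      rcases hp with rfl | hp <;> rcases hq with rfl | hq
      · simp only [cmp_self_eq_eq]
      · rw [cmp_eq_cmp_symm]
        exact hab _ hq
      · exact hab _ hp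
      · exact f.prop.1 _ hp _ hq
    · intro p hp
      rcases Finset.mem_insert.1 hp with rfl | hp
      exacts [hb.symm, f.prop.2 _ hp]

def definedAtRight (H : ColorClassesDense κ) (b : α) : Cofinal (ColoredPartialIso κ) where
  carrier := {f | ∃ a, (a, b) ∈ f.val}
  isCofinal f := by
    obtain ⟨f', ⟨a, ha⟩, hff'⟩ := (definedAtLeft H b).isCofinal f.swap
    exact ⟨f'.swap, ⟨a, mem_swap.2 ha⟩, fun p hp => mem_swap.2 (hff' (mem_swap.2 (by simpa)))⟩

end ColoredPartialIso

open ColoredPartialIso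

variable {κ : α → K}

theorem ColorClassesDense.exists_orderIso_apply_eq [Countable α] (H : ColorClassesDense κ)
    {a b : α} (hab : κ a = κ b) : ∃ e : α ≃o α, (∀ x, κ (e x) = κ x) ∧ e a = b := by
  cases nonempty_encodable α
  let seed : ColoredPartialIso κ := ⟨{(a, b)}, by simp [hab]⟩
  let cofinals : α ⊕ α → Cofinal (ColoredPartialIso κ) :=
    fun p => Sum.recOn p (definedAtLeft H) (definedAtRight H)
  let I := idealOfCofinals seed cofinals
  have hF : ∀ x, ∃ y, ∃ f ∈ I, (x, y) ∈ f.val := fun x => by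
    obtain ⟨f, ⟨y, hy⟩, hf⟩ := cofinal_meets_idealOfCofinals seed cofinals (.inl x)
    exact ⟨y, f, hf, hy⟩
  have hG : ∀ y, ∃ x, ∃ f ∈ I, (x, y) ∈ f.val := fun y => by
    obtain ⟨f, ⟨x, hx⟩, hf⟩ := cofinal_meets_idealOfCofinals seed cofinals (.inr y)
    exact ⟨x, f, hf, hx⟩
  choose F fF hfF hF using hF
  choose G fG hfG hG using hG
  have hcmp : ∀ p q, (∃ f ∈ I, p ∈ f.val) → (∃ f ∈ I, q ∈ f.val) → cmp p.1 q.1 = cmp p.2 q.2 := by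
    rintro p q ⟨f, hf, hp⟩ ⟨g, hg, hq⟩
    obtain ⟨m, -, hfm, hgm⟩ := I.directed _ hf _ hg
    exact m.prop.1 _ (hfm hp) _ (hgm hq)
  refine ⟨OrderIso.ofCmpEqCmp F G fun x y => hcmp (x, F x) (G y, y) ⟨_, hfF x, hF x⟩
    ⟨_, hfG y, hG y⟩, fun x => ((fF x).prop.2 _ (hF x)).symm, ?_⟩
  have h := hcmp (a, F a) (a, b) ⟨_, hfF a, hF a⟩ ⟨seed, mem_idealOfCofinals _ _, by simp [seed]⟩
  rw [cmp_self_eq_eq] at h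
  exact (cmp_eq_eq_iff _ _).1 h.symm

theorem exists_lt_forall_image_Ioo_eq [Nontrivial α] [Finite K] (k : α → K) :
    ∃ u v, u < v ∧ ∀ u' v', u ≤ u' → u' < v' → v' ≤ v → k '' Ioo u' v' = k '' Ioo u v := by
  obtain ⟨u₀, v₀, h₀⟩ := exists_pair_lt α
  obtain ⟨⟨u, v⟩, huv, hmin⟩ := (measure fun p : α × α => (k '' Ioo p.1 p.2).ncard).wf.has_min
    {p | p.1 < p.2} ⟨(u₀, v₀), h₀⟩
  refine ⟨u, v, huv, fun u' v' hu hlt hv => ?_⟩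
  exact eq_of_subset_of_ncard_le (image_mono (Ioo_subset_Ioo hu hv))
    (not_lt.1 (hmin (u', v') hlt)) (toFinite _)

theorem colorClassesDense_Ioo {k : α → K} {u v : α} (huv : u < v)
    (hk : ∀ u' v', u ≤ u' → u' < v' → v' ≤ v → k '' Ioo u' v' = k '' Ioo u v) :
    ColorClassesDense fun x : Ioo u v => k x := by
  intro x L U hLU
  set L' := insert u (L.map (Function.Embedding.subtype _))
  set U' := insert v (U.map (Function.Embedding.subtype _))
  have hL'U' : ∀ l ∈ L', ∀ w ∈ U', l < w := by
    simp only [L', U', Finset.mem_insert, Finset.mem_map, Function.Embedding.subtype_apply]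
    rintro _ (rfl | ⟨l, hl, rfl⟩) _ (rfl | ⟨w, hw, rfl⟩)
    exacts [huv, w.2.1, l.2.2, hLU l hl w hw]
  have hL' : L'.Nonempty := Finset.insert_nonempty _ _
  have hU' : U'.Nonempty := Finset.insert_nonempty _ _
  have hu := L'.le_max' u (Finset.mem_insert_self _ _)
  have hv := U'.min'_le v (Finset.mem_insert_self _ _)
  have hx : k x ∈ k '' Ioo (L'.max' hL') (U'.min' hU') := by
    rw [hk _ _ hu (hL'U' _ (L'.max'_mem hL') _ (U'.min'_mem hU')) hv]
    exact mem_image_of_mem k x.2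
  obtain ⟨y, ⟨hly, hyw⟩, hy⟩ := hx
  refine ⟨⟨y, hu.trans_lt hly, hyw.trans_le hv⟩, fun l hl => ?_, fun w hw => ?_, hy⟩
  · exact (L'.le_max' _ (Finset.mem_insert_of_mem (Finset.mem_map_of_mem _ hl))).trans_lt hly
  · exact hyw.trans_le (U'.min'_le _ (Finset.mem_insert_of_mem (Finset.mem_map_of_mem _ hw)))

end Order

namespace Equiv.Perm

variable {α : Type*} {s : Set α} [DecidablePred (· ∈ s)]

theorem strictMono_ofSubtype [LinearOrder α] (hs : s.OrdConnected) {e : Perm s}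
    (he : StrictMono e) : StrictMono (ofSubtype e) := by
  intro x y hxy
  by_cases hx : x ∈ s <;> by_cases hy : y ∈ s
  · simpa [ofSubtype_apply_of_mem, hx, hy] using he (show (⟨x, hx⟩ : s) < ⟨y, hy⟩ from hxy)
  · rw [ofSubtype_apply_of_mem _ hx, ofSubtype_apply_of_not_mem _ hy]
    exact lt_of_not_ge fun hyz => hy (hs.out hx (e ⟨x, hx⟩).2 ⟨hxy.le, hyz⟩)
  · rw [ofSubtype_apply_of_not_mem _ hx, ofSubtype_apply_of_mem _ hy]
    exact lt_of_not_ge fun hzx => hx (hs.out (e ⟨y, hy⟩).2 hy ⟨hzx, hxy.le⟩)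
  · simpa [ofSubtype_apply_of_not_mem, hx, hy] using hxy

theorem comp_ofSubtype {K : Type*} {κ : α → K} {e : Perm s} (he : ∀ x, κ (e x) = κ x) :
    κ ∘ ofSubtype e = κ := by
  ext x
  by_cases hx : x ∈ s
  · rw [Function.comp_apply, ofSubtype_apply_of_mem _ hx, he]
  · rw [Function.comp_apply, ofSubtype_apply_of_not_mem _ hx]

end Equiv.Perm

open Equiv.Perm in
theorem Order.exists_orderIso_ne_id_of_finite_coloring {α K : Type*} [LinearOrder α] [Countable α]
    [DenselyOrdered α] [Nontrivial α] [Finite K] (k : α → K) :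
    ∃ g : α ≃o α, (∃ a, g a ≠ a) ∧ ∀ x, k (g x) = k x := by
  classical
  obtain ⟨u, v, huv, hk⟩ := exists_lt_forall_image_Ioo_eq k
  have H := colorClassesDense_Ioo huv hk
  obtain ⟨a, ha⟩ := nonempty_Ioo.2 huv
  obtain ⟨b, hab, -, hb⟩ := H ⟨a, ha⟩ {⟨a, ha⟩} ∅ (by simp)
  obtain ⟨e, hek, hea⟩ := H.exists_orderIso_apply_eq hb.symm
  have hg := strictMono_ofSubtype (e := e.toEquiv) ordConnected_Ioo e.strictMono
  refine ⟨hg.orderIsoOfSurjective _ (Equiv.surjective _), ⟨a, ?_⟩, congrFun (comp_ofSubtype hek)⟩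
  rw [StrictMono.coe_orderIsoOfSurjective, ofSubtype_apply_of_mem _ ha, OrderIso.coe_toEquiv, hea]
  exact (Subtype.coe_lt_coe.2 (hab _ (Finset.mem_singleton_self _))).ne'

theorem dense_local_order_distinguishing_number_infinite_general
    (Q₀ : Set ℚ)
    (R : ℚ → ℚ → Prop)
    (hR : ∀ x y : ℚ, R x y ↔
      ((x < y ∧ (x ∈ Q₀ ↔ y ∈ Q₀)) ∨ (y < x ∧ ¬ (x ∈ Q₀ ↔ y ∈ Q₀))))
    (n : ℕ) (c : ℚ → Fin n) :
    ∃ g : ℚ ≃ ℚ, (∃ q, g q ≠ q) ∧ (∀ x y, R x y ↔ R (g x) (g y)) ∧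
      ∀ q, c (g q) = c q := by
  obtain ⟨g, hmoves, hg⟩ := Order.exists_orderIso_ne_id_of_finite_coloring fun x => (c x, x ∈ Q₀)
  have hQ₀ (x : ℚ) : g x ∈ Q₀ ↔ x ∈ Q₀ := (congrArg Prod.snd (hg x)).to_iff
  refine ⟨g.toEquiv, hmoves, fun x y => ?_, fun q => congrArg Prod.fst (hg q)⟩
  simp only [hR, OrderIso.coe_toEquiv, g.lt_iff_lt, hQ₀]

/-- The dense local order `ℚ*` has infinite distinguishing number. -/
theorem dense_local_order_distinguishing_number_infinite
    (Q₀ : Set ℚ)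
    (hdense : ∀ a b : ℚ, a < b →
      (∃ q ∈ Q₀, a < q ∧ q < b) ∧ (∃ q ∉ Q₀, a < q ∧ q < b))
    (R : ℚ → ℚ → Prop)
    (hR : ∀ x y : ℚ, R x y ↔
      ((x < y ∧ (x ∈ Q₀ ↔ y ∈ Q₀)) ∨ (y < x ∧ ¬ (x ∈ Q₀ ↔ y ∈ Q₀))))
    (n : ℕ) (c : ℚ → Fin n) :
    ∃ g : ℚ ≃ ℚ, (∃ q, g q ≠ q) ∧ (∀ x y, R x y ↔ R (g x) (g y)) ∧
      ∀ q, c (g q) = c q :=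
  dense_local_order_distinguishing_number_infinite_general Q₀ R hR n c
end

section
/- Let (V, →) be a countably infinite tournament with the extension property: for all disjoint finite sets A, B ⊆ V there exists x ∈ V \ (A ∪ B) with x → a for all a ∈ A and b → x for all b ∈ B. (Such a tournament is the random tournament 𝕋^∞.) Then its distinguishing number is 2: there exists a coloring c : V → Bool such that the only automorphism g of the tournament with c ∘ g = c is the identity, while the tournament does have a nontrivial automorphism. -/
/-!
A coloring: build a sequence `d 0 → d 1 → d 2 → ⋯` in which each `d n` is dominated by all
earlier terms, and, for the `n`-th pair `(v, w)` in an enumeration of `V × V`, satisfies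
`w → d n`, and also `d n → v` if `v ≠ w` and `v` is not an earlier term. Color the range of `d`.
An automorphism preserving the color restricts to an automorphism of `(ℕ, <)` on the range,
so it fixes `d` pointwise, and then fixes every other vertex too, since distinct vertices off
the range are separated by some `d n`.

A nontrivial automorphism: by back and forth, every finite partial isomorphism between two
countable tournaments with the extension property extends to an isomorphism; apply this to
`a ↦ b` for any `a ≠ b`.
-/

namespace Tournament

variable {V : Type*} (R : V → V → Prop)

structure IsTournament : Prop where
  irrefl : ∀ x, ¬ R x x
  rel_iff_not_rel : ∀ x y, x ≠ y → (R x y ↔ ¬ R y x)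

def HasExtensionProperty : Prop :=
  ∀ A B : Finset V, Disjoint A B →
    ∃ x, x ∉ A ∧ x ∉ B ∧ (∀ a ∈ A, R x a) ∧ (∀ b ∈ B, R b x)

def IsDistinguishing (c : V → Bool) : Prop :=
  ∀ g : V ≃ V, (∀ x y, R x y ↔ R (g x) (g y)) → (∀ v, c (g v) = c v) → ∀ v, g v = v

variable {R}

theorem HasExtensionProperty.nonempty (hR : HasExtensionProperty R) : Nonempty V :=
  let ⟨x, _⟩ := hR ∅ ∅ (Finset.disjoint_empty_left _)
  ⟨x⟩

theorem HasExtensionProperty.exists_above (hR : HasExtensionProperty R) (F : Finset V)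
    (u w : V) : ∃ x, (∀ b ∈ F, R b x) ∧ R w x ∧ (u ≠ w → u ∉ F → R x u) := by
  classical
  obtain ⟨x, -, -, hA, hB⟩ := hR ({u} \ insert w F) (insert w F) Finset.sdiff_disjoint
  refine ⟨x, fun b hb => hB b (Finset.mem_insert_of_mem hb), hB w (Finset.mem_insert_self _ _),
    fun huw huF => hA u ?_⟩
  simp [huw, huF]

theorem IsTournament.rel_iff_lt {d : ℕ → V} (hR : IsTournament R)
    (hd : ∀ i j, i < j → R (d i) (d j)) (i j : ℕ) : R (d i) (d j) ↔ i < j := by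
  refine ⟨fun hij => ?_, hd i j⟩
  rcases lt_trichotomy i j with h | rfl | h
  · exact h
  · exact absurd hij (hR.irrefl _)
  · have hne : d i ≠ d j := fun he => hR.irrefl (d i) (he ▸ hij)
    exact absurd (hd j i h) ((hR.rel_iff_not_rel _ _ hne).mp hij)

theorem IsTournament.exists_separating_chain [Countable V] (hR : IsTournament R)
    (hRe : HasExtensionProperty R) :
    ∃ d : ℕ → V, (∀ i j, R (d i) (d j) ↔ i < j) ∧
      ∀ v w, v ∉ Set.range d → w ∉ Set.range d → v ≠ w → ∃ i, R (d i) v ∧ ¬ R (d i) w := by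
  classical
  have := hRe.nonempty
  obtain ⟨q, hq⟩ := exists_surjective_nat (V × V)
  choose next hnext using fun (F : Finset V) (p : V × V) => hRe.exists_above F p.1 p.2
  let stage : ℕ → Finset V := fun n => Nat.rec ∅ (fun n F => insert (next F (q n)) F) n
  let d : ℕ → V := fun n => next (stage n) (q n)
  have mem_stage : ∀ n x, x ∈ stage n ↔ ∃ i < n, d i = x := by
    intro n x
    induction n with
    | zero => simp [stage]
    | succ n ih =>
      change x ∈ insert (d n) (stage n) ↔ _
      rw [Finset.mem_insert, ih]
      grind
  have hd := hR.rel_iff_lt fun i j hij => (hnext _ _).1 _ ((mem_stage j _).mpr ⟨i, hij, rfl⟩)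
  refine ⟨d, hd, fun v w hv hw hvw => ?_⟩
  obtain ⟨n, hn⟩ := hq (v, w)
  have not_mem : ∀ x ∉ Set.range d, x ∉ stage n := fun x hx hmem =>
    let ⟨i, _, hi⟩ := (mem_stage n x).mp hmem
    hx ⟨i, hi⟩
  obtain rfl : v = (q n).1 := by rw [hn]
  obtain rfl : w = (q n).2 := by rw [hn]
  obtain ⟨-, hwd, hdv⟩ := hnext (stage n) (q n)
  have hdw : d n ≠ (q n).2 := fun h => hw ⟨n, h⟩
  exact ⟨n, hdv hvw (not_mem _ hv), (hR.rel_iff_not_rel _ _ (Ne.symm hdw)).mp hwd⟩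

theorem apply_eq_of_rel_iff_lt {d : ℕ → V} (hd : ∀ i j, R (d i) (d j) ↔ i < j) {g : V ≃ V}
    (hg : ∀ x y, R x y ↔ R (g x) (g y)) (hgd : ∀ v, g v ∈ Set.range d ↔ v ∈ Set.range d)
    (i : ℕ) : g (d i) = d i := by
  have hirr : ∀ i, ¬ R (d i) (d i) := fun i h => lt_irrefl i ((hd i i).mp h)
  have hinj : Function.Injective d := fun i j hij => by
    rcases lt_trichotomy i j with h | h | h
    · exact absurd ((hd i j).mpr h) (hij ▸ hirr i)
    · exact h
    · exact absurd ((hd j i).mpr h) (hij ▸ hirr i)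
  choose σ hσ using fun i => (hgd (d i)).mpr ⟨i, rfl⟩
  have hmono : StrictMono σ := fun i j hij => by
    rw [← hd, hσ, hσ, ← hg, hd]
    exact hij
  have hsurj : Function.Surjective σ := fun n => by
    obtain ⟨m, hm⟩ := (hgd (g.symm (d n))).mp (by simp)
    exact ⟨m, hinj (by rw [hσ, hm, g.apply_symm_apply])⟩
  have hid : σ = id :=
    congrArg DFunLike.coe (Subsingleton.elim (hmono.orderIsoOfSurjective σ hsurj) (.refl ℕ))
  rw [← hσ, hid, id]

theorem isDistinguishing_of_separating_chain {d : ℕ → V} (hd : ∀ i j, R (d i) (d j) ↔ i < j)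
    (hsep : ∀ v w, v ∉ Set.range d → w ∉ Set.range d → v ≠ w → ∃ i, R (d i) v ∧ ¬ R (d i) w)
    {c : V → Bool} (hc : ∀ v, c v = true ↔ v ∈ Set.range d) : IsDistinguishing R c := by
  intro g hg hcg v
  have hgd : ∀ v, g v ∈ Set.range d ↔ v ∈ Set.range d := fun v => by rw [← hc, ← hc, hcg]
  by_cases hv : v ∈ Set.range d
  · obtain ⟨i, rfl⟩ := hv
    exact apply_eq_of_rel_iff_lt hd hg hgd i
  by_contra hne
  obtain ⟨i, hgv, hiv⟩ := hsep (g v) v (by rwa [hgd]) hv hne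
  rw [← apply_eq_of_rel_iff_lt hd hg hgd i, ← hg] at hgv
  exact hiv hgv

theorem IsTournament.exists_isDistinguishing [Countable V] (hR : IsTournament R)
    (hRe : HasExtensionProperty R) : ∃ c, IsDistinguishing R c := by
  classical
  obtain ⟨d, hd, hsep⟩ := hR.exists_separating_chain hRe
  exact ⟨fun v => decide (v ∈ Set.range d),
    isDistinguishing_of_separating_chain hd hsep fun _ => decide_eq_true_iff⟩

section PartialIso

variable {α β : Type*} (R : α → α → Prop) (S : β → β → Prop)

def IsPartialIso (s : Set (α × β)) : Prop :=
  ∀ p ∈ s, ∀ q ∈ s, (p.1 = q.1 ↔ p.2 = q.2) ∧ (R p.1 q.1 ↔ S p.2 q.2)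

variable {R S}

theorem IsPartialIso.image_swap {s : Set (α × β)} (h : IsPartialIso R S s) :
    IsPartialIso S R (Prod.swap '' s) := by
  rintro _ ⟨p, hp, rfl⟩ _ ⟨q, hq, rfl⟩
  obtain ⟨h1, h2⟩ := h p hp q hq
  exact ⟨h1.symm, h2.symm⟩

theorem isPartialIso_insert {s : Set (α × β)} (h : IsPartialIso R S s) {a : α} {b : β}
    (hab : R a a ↔ S b b)
    (hcompat : ∀ p ∈ s, (p.1 = a ↔ p.2 = b) ∧ (R p.1 a ↔ S p.2 b) ∧ (R a p.1 ↔ S b p.2)) :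
    IsPartialIso R S (insert (a, b) s) := by
  rintro p (rfl | hp) q (rfl | hq)
  · exact ⟨iff_of_true rfl rfl, hab⟩
  · obtain ⟨h1, -, h3⟩ := hcompat q hq
    exact ⟨eq_comm.trans (h1.trans eq_comm), h3⟩
  · obtain ⟨h1, h2, -⟩ := hcompat p hp
    exact ⟨h1, h2⟩
  · exact h p hp q hq

theorem IsPartialIso.exists_insert_left (hR : IsTournament R) (hS : IsTournament S)
    (hSe : HasExtensionProperty S) {s : Set (α × β)} (hs : s.Finite) (h : IsPartialIso R S s)
    (a : α) : ∃ b, IsPartialIso R S (insert (a, b) s) := by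
  by_cases hdom : ∃ b, (a, b) ∈ s
  · obtain ⟨b, hb⟩ := hdom
    exact ⟨b, by rwa [Set.insert_eq_of_mem hb]⟩
  push Not at hdom
  have hAfin := (hs.subset (Set.sep_subset s fun p => R a p.1)).image Prod.snd
  have hBfin := (hs.subset (Set.sep_subset s fun p => ¬ R a p.1)).image Prod.snd
  obtain ⟨b, hbA, hbB, hA, hB⟩ := hSe hAfin.toFinset hBfin.toFinset (by
    rw [Finset.disjoint_left]
    simp only [Set.Finite.mem_toFinset]
    rintro _ ⟨p, ⟨hp, hap⟩, rfl⟩ ⟨q, ⟨hq, haq⟩, hqp⟩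
    exact haq ((h p hp q hq).1.mpr hqp.symm ▸ hap))
  simp only [Set.Finite.mem_toFinset] at hbA hbB hA hB
  have hcod : ∀ p ∈ s, p.2 ≠ b := by
    rintro p hp rfl
    by_cases hap : R a p.1
    · exact hbA ⟨p, ⟨hp, hap⟩, rfl⟩
    · exact hbB ⟨p, ⟨hp, hap⟩, rfl⟩
  have hrel : ∀ p ∈ s, R a p.1 ↔ S b p.2 := fun p hp =>
    ⟨fun hap => hA _ ⟨p, ⟨hp, hap⟩, rfl⟩, fun hbp => by_contra fun hap =>
      (hS.rel_iff_not_rel _ _ (hcod p hp)).mp (hB _ ⟨p, ⟨hp, hap⟩, rfl⟩) hbp⟩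
  refine ⟨b, isPartialIso_insert h (iff_of_false (hR.irrefl a) (hS.irrefl b)) fun p hp => ?_⟩
  have hpa : p.1 ≠ a := fun hpa => hdom p.2 (hpa ▸ hp)
  refine ⟨iff_of_false hpa (hcod p hp), ?_, hrel p hp⟩
  rw [hR.rel_iff_not_rel _ _ hpa, hS.rel_iff_not_rel _ _ (hcod p hp), hrel p hp]

theorem IsPartialIso.exists_insert_right (hR : IsTournament R) (hS : IsTournament S)
    (hRe : HasExtensionProperty R) {s : Set (α × β)} (hs : s.Finite) (h : IsPartialIso R S s)
    (b : β) : ∃ a, IsPartialIso R S (insert (a, b) s) := by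
  obtain ⟨a, ha⟩ := h.image_swap.exists_insert_left hS hR hRe (hs.image _) b
  refine ⟨a, ?_⟩
  simpa [Set.image_insert_eq, Set.image_image] using ha.image_swap

theorem IsPartialIso.exists_equiv_of_forall {s : Set (α × β)} (h : IsPartialIso R S s)
    (hdom : ∀ a, ∃ b, (a, b) ∈ s) (hcod : ∀ b, ∃ a, (a, b) ∈ s) :
    ∃ g : α ≃ β, (∀ x y, R x y ↔ S (g x) (g y)) ∧ ∀ p ∈ s, g p.1 = p.2 := by
  choose f hf using hdom
  have hinj : Function.Injective f := fun a a' he => ((h _ (hf a) _ (hf a')).1.mpr he)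
  have hsurj : Function.Surjective f := fun b =>
    let ⟨a, ha⟩ := hcod b
    ⟨a, (h _ (hf a) _ ha).1.mp rfl⟩
  refine ⟨.ofBijective f ⟨hinj, hsurj⟩, fun x y => (h _ (hf x) _ (hf y)).2,
    fun p hp => (h _ (hf p.1) _ hp).1.mp rfl⟩

theorem IsPartialIso.exists_equiv [Countable α] [Countable β] (hR : IsTournament R)
    (hS : IsTournament S) (hRe : HasExtensionProperty R) (hSe : HasExtensionProperty S)
    {s : Set (α × β)} (hs : s.Finite) (h : IsPartialIso R S s) :
    ∃ g : α ≃ β, (∀ x y, R x y ↔ S (g x) (g y)) ∧ ∀ p ∈ s, g p.1 = p.2 := by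
  have := Encodable.ofCountable α
  have := Encodable.ofCountable β
  let P := {t : Set (α × β) // t.Finite ∧ IsPartialIso R S t}
  let D : α ⊕ β → Order.Cofinal P
    | .inl a =>
      { carrier := {t | ∃ b, (a, b) ∈ t.1}
        isCofinal := fun t =>
          let ⟨b, hb⟩ := t.2.2.exists_insert_left hR hS hSe t.2.1 a
          ⟨⟨_, t.2.1.insert _, hb⟩, ⟨b, Set.mem_insert _ _⟩, Set.subset_insert _ _⟩ }
    | .inr b =>
      { carrier := {t | ∃ a, (a, b) ∈ t.1}
        isCofinal := fun t =>
          let ⟨a, ha⟩ := t.2.2.exists_insert_right hR hS hRe t.2.1 b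
          ⟨⟨_, t.2.1.insert _, ha⟩, ⟨a, Set.mem_insert _ _⟩, Set.subset_insert _ _⟩ }
  let I := Order.idealOfCofinals (⟨s, hs, h⟩ : P) D
  have hI : IsPartialIso R S (⋃ t ∈ I, t.1) := by
    simp only [IsPartialIso, Set.mem_iUnion]
    rintro p ⟨t, ht, hp⟩ q ⟨u, hu, hq⟩
    obtain ⟨v, -, htv, huv⟩ := I.directed t ht u hu
    exact v.2.2 p (htv hp) q (huv hq)
  obtain ⟨g, hg, hgs⟩ := hI.exists_equiv_of_forall
    (fun a => by
      obtain ⟨t, ⟨b, hb⟩, ht⟩ := Order.cofinal_meets_idealOfCofinals _ D (.inl a)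
      exact ⟨b, Set.mem_biUnion ht hb⟩)
    (fun b => by
      obtain ⟨t, ⟨a, ha⟩, ht⟩ := Order.cofinal_meets_idealOfCofinals _ D (.inr b)
      exact ⟨a, Set.mem_biUnion ht ha⟩)
  exact ⟨g, hg, fun p hp => hgs p (Set.mem_biUnion (Order.mem_idealOfCofinals _ D) hp)⟩

end PartialIso

theorem IsTournament.exists_automorphism_ne [Countable V] (hR : IsTournament R)
    (hRe : HasExtensionProperty R) : ∃ g : V ≃ V, (∀ x y, R x y ↔ R (g x) (g y)) ∧ ∃ v, g v ≠ v := by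
  obtain ⟨a, -⟩ := hRe ∅ ∅ (Finset.disjoint_empty_left _)
  obtain ⟨b, -, hb, -⟩ := hRe ∅ {a} (Finset.disjoint_empty_left _)
  have hab : IsPartialIso R R {(a, b)} := by
    simp [IsPartialIso, hR.irrefl]
  obtain ⟨g, hg, hgab⟩ := hab.exists_equiv hR hR hRe hRe (Set.finite_singleton _)
  exact ⟨g, hg, a, by simpa [hgab (a, b) rfl, eq_comm] using hb⟩

end Tournament

theorem random_tournament_distinguishing_number_two_general
    (V : Type*) [Countable V] (R : V → V → Prop)
    (hirr : ∀ x, ¬ R x x)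
    (htot : ∀ x y : V, x ≠ y → (R x y ↔ ¬ R y x))
    (hext : ∀ A B : Finset V, Disjoint A B →
      ∃ x, x ∉ A ∧ x ∉ B ∧ (∀ a ∈ A, R x a) ∧ (∀ b ∈ B, R b x)) :
    (∃ c : V → Bool, ∀ g : V ≃ V, (∀ x y, R x y ↔ R (g x) (g y)) →
        (∀ v, c (g v) = c v) → ∀ v, g v = v) ∧
    (∃ g : V ≃ V, (∀ x y, R x y ↔ R (g x) (g y)) ∧ ∃ v, g v ≠ v) := by
  have hR : Tournament.IsTournament R := ⟨hirr, htot⟩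
  exact ⟨hR.exists_isDistinguishing hext, hR.exists_automorphism_ne hext⟩

/-- A countably infinite tournament with the extension property
(the random tournament `𝕋^∞`) has distinguishing number 2. -/
theorem random_tournament_distinguishing_number_two
    (V : Type*) [Countable V] [Infinite V] (R : V → V → Prop)
    (hirr : ∀ x, ¬ R x x)
    (htot : ∀ x y : V, x ≠ y → (R x y ↔ ¬ R y x))
    (hext : ∀ A B : Finset V, Disjoint A B →
      ∃ x, x ∉ A ∧ x ∉ B ∧ (∀ a ∈ A, R x a) ∧ (∀ b ∈ B, R b x)) :
    (∃ c : V → Bool, ∀ g : V ≃ V, (∀ x y, R x y ↔ R (g x) (g y)) →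
        (∀ v, c (g v) = c v) → ∀ v, g v = v) ∧
    (∃ g : V ≃ V, (∀ x y, R x y ↔ R (g x) (g y)) ∧ ∃ v, g v ≠ v) :=
  random_tournament_distinguishing_number_two_general V R hirr htot hext
end

section
/- Let G be a countably infinite simple graph with the extension property: for all disjoint finite sets A, B of vertices there exists a vertex v ∉ A ∪ B adjacent to every vertex of A and to no vertex of B. (Such a graph is the Rado graph.) Then its distinguishing number is 2: there exists a coloring c of the vertices with values in Bool such that the only automorphism g of G with c ∘ g = c is the identity, while G does have a nontrivial automorphism. -/
/-!
The nontrivial automorphism comes from back-and-forth: the extension property makes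
`(G, G)` an extension pair of first-order structures, so `G` is ultrahomogeneous and any
vertex can be sent to any other.

For the colouring, build greedily an induced one-way infinite path `x₀ x₁ x₂ …` such that
every pair `u ≠ v` of vertices off the path is separated by some `xₙ₊₁`, adjacent to `u` but
not to `v`, and colour the path. An automorphism preserving the colouring restricts to an
automorphism of the path, which is rigid because `x₀` is its only end; so it fixes the path
pointwise, and then every other vertex, as those are determined by their neighbours on the path.
-/

open FirstOrder Language Structure Substructure Function

namespace SimpleGraph

variable {V W : Type*} {G : SimpleGraph V}

def HasExtensionProperty (G : SimpleGraph V) : Prop :=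
  ∀ A B : Finset V, Disjoint A B →
    ∃ v, v ∉ A ∧ v ∉ B ∧ (∀ a ∈ A, G.Adj v a) ∧ ∀ b ∈ B, ¬ G.Adj v b

theorem HasExtensionProperty.exists_adj_sdiff [DecidableEq V] (hG : G.HasExtensionProperty)
    (A B : Finset V) :
    ∃ v, v ∉ A ∧ v ∉ B ∧ (∀ a ∈ A, a ∉ B → G.Adj v a) ∧ ∀ b ∈ B, ¬ G.Adj v b := by
  obtain ⟨v, hvA, hvB, hA, hB⟩ := hG (A \ B) B Finset.sdiff_disjoint
  exact ⟨v, fun h => hvA (Finset.mem_sdiff.2 ⟨h, hvB⟩), hvB,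
    fun a ha haB => hA a (Finset.mem_sdiff.2 ⟨ha, haB⟩), hB⟩

theorem HasExtensionProperty.exists_adj_iff {ι : Type*} [Finite ι] (hG : G.HasExtensionProperty)
    {φ : ι → V} (hφ : Injective φ) (P : ι → Prop) :
    ∃ w, w ∉ Set.range φ ∧ ∀ i, G.Adj w (φ i) ↔ P i := by
  classical
  cases nonempty_fintype ι
  obtain ⟨w, hwA, hwB, hA, hB⟩ := hG ((Finset.univ.filter P).image φ)
    ((Finset.univ.filter (¬ P ·)).image φ)
    ((Finset.disjoint_image hφ).2 (Finset.disjoint_filter_filter_not _ _ _))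
  refine ⟨w, ?_, fun i => ⟨fun h => by_contra fun hP => hB _ (by simpa using ⟨i, hP, rfl⟩) h,
    fun hP => hA _ (by simpa using ⟨i, hP, rfl⟩)⟩⟩
  rintro ⟨i, rfl⟩
  by_cases hP : P i
  · exact hwA (by simpa using ⟨i, hP, rfl⟩)
  · exact hwB (by simpa using ⟨i, hP, rfl⟩)

theorem hasse_nat_adj_iff {m n : ℕ} : (hasse ℕ).Adj m n ↔ m + 1 = n ∨ n + 1 = m := by
  simp only [hasse_adj, Nat.covBy_iff_add_one_eq]

theorem hasse_nat_iso_apply_eq_self (σ : hasse ℕ ≃g hasse ℕ) (n : ℕ) : σ n = n := by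
  -- `0` is the only vertex with a single neighbour.
  have h0 : σ 0 = 0 := by
    rcases hk : σ 0 with _ | k
    · rfl
    have hadj : ∀ m, (hasse ℕ).Adj (k + 1) m → σ.symm m = 1 := fun m h => by
      have h' := σ.symm.map_adj_iff.2 h
      rw [← hk, σ.symm_apply_apply, hasse_nat_adj_iff] at h'
      omega
    have := σ.symm.injective ((hadj k (hasse_nat_adj_iff.2 (.inr rfl))).trans
      (hadj (k + 2) (hasse_nat_adj_iff.2 (.inl rfl))).symm)
    omega
  suffices ∀ n, σ n = n ∧ σ (n + 1) = n + 1 from (this n).1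
  intro n
  induction n with
  | zero =>
    have h := σ.map_adj_iff.2 (hasse_nat_adj_iff.2 (.inl rfl) : (hasse ℕ).Adj 0 1)
    rw [h0, hasse_nat_adj_iff] at h
    exact ⟨h0, by simp only [zero_add] at h ⊢; omega⟩
  | succ n ih =>
    have h := σ.map_adj_iff.2 (hasse_nat_adj_iff.2 (.inl rfl) : (hasse ℕ).Adj (n + 1) (n + 2))
    rw [ih.2, hasse_nat_adj_iff] at h
    refine ⟨ih.2, (h.resolve_right fun h' => ?_).symm⟩
    have := σ.injective (ih.1.trans (by omega : n = σ (n + 2)))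
    omega

theorem Iso.apply_hasse_nat_embedding_eq_self (f : hasse ℕ ↪g G) (g : G ≃g G)
    (hg : ∀ v, g v ∈ Set.range f ↔ v ∈ Set.range f) (n : ℕ) : g (f n) = f n := by
  let e : ℕ ≃ Set.range f := Equiv.ofInjective f f.injective
  let τ : ℕ ≃ ℕ := (e.trans (g.toEquiv.subtypeEquiv fun v => (hg v).symm)).trans e.symm
  have hτ : ∀ m, f (τ m) = g (f m) := fun m => Equiv.apply_ofInjective_symm f.injective _
  let σ : hasse ℕ ≃g hasse ℕ := ⟨τ, fun {a b} => by
    rw [← f.map_adj_iff, hτ, hτ, g.map_adj_iff, f.map_adj_iff]⟩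
  rw [← hτ]
  exact congrArg f (hasse_nat_iso_apply_eq_self σ n)

theorem Iso.apply_eq_self_of_separating (g : G ≃g G) {R : Set V} (hR : ∀ r ∈ R, g r = r)
    (hg : ∀ v, g v ∈ R ↔ v ∈ R)
    (hsep : ∀ u ∉ R, ∀ v ∉ R, u ≠ v → ∃ r ∈ R, G.Adj r u ∧ ¬ G.Adj r v) (v : V) :
    g v = v := by
  by_contra hv
  have hvR : v ∉ R := fun h => hv (hR v h)
  obtain ⟨r, hr, hadj, hnadj⟩ := hsep v hvR (g v) (by rwa [hg]) (Ne.symm hv)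
  exact hnadj (hR r hr ▸ g.map_adj_iff.2 hadj)

def hasseNatEmbedding (x : ℕ → V)
    (hx : ∀ i j, i < j → x j ≠ x i ∧ (G.Adj (x j) (x i) ↔ j = i + 1)) : hasse ℕ ↪g G where
  toFun := x
  inj' i j hij := by
    by_contra hne
    rcases Nat.lt_or_gt_of_ne hne with h | h
    · exact (hx i j h).1 hij.symm
    · exact (hx j i h).1 hij
  map_rel_iff' {i j} := by
    change G.Adj (x i) (x j) ↔ _
    rw [hasse_nat_adj_iff]
    rcases lt_trichotomy i j with h | rfl | h
    · rw [G.adj_comm, (hx i j h).2]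
      omega
    · simp
    · rw [(hx j i h).2]
      omega

section Ray

variable [DecidableEq V]

/-- `rayStates step x₀ n = (xₙ, {x₀, …, xₙ₋₁})`, where `xₙ₊₁ = step n xₙ {x₀, …, xₙ₋₁}`. -/
def rayStates (step : ℕ → V → Finset V → V) (x₀ : V) : ℕ → V × Finset V
  | 0 => (x₀, ∅)
  | n + 1 => (step n (rayStates step x₀ n).1 (rayStates step x₀ n).2,
      insert (rayStates step x₀ n).1 (rayStates step x₀ n).2)

variable (step : ℕ → V → Finset V → V) (x₀ : V)

theorem rayStates_snd (n : ℕ) :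
    (rayStates step x₀ n).2 = (Finset.range n).image fun i => (rayStates step x₀ i).1 := by
  induction n with
  | zero => rfl
  | succ n ih => rw [Finset.range_add_one, Finset.image_insert, ← ih]; rfl

variable {step}
variable (hstep : ∀ n x S, x ∉ S →
  step n x S ∉ insert x S ∧ G.Adj (step n x S) x ∧ ∀ s ∈ S, ¬ G.Adj (step n x S) s)
include hstep

theorem rayStates_fst_notMem_snd (n : ℕ) :
    (rayStates step x₀ n).1 ∉ (rayStates step x₀ n).2 := by
  induction n with
  | zero => exact Finset.notMem_empty _
  | succ n ih => exact (hstep n _ _ ih).1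

theorem rayStates_fst_ne_and_adj_iff {i j : ℕ} (hij : i < j) :
    (rayStates step x₀ j).1 ≠ (rayStates step x₀ i).1 ∧
      (G.Adj (rayStates step x₀ j).1 (rayStates step x₀ i).1 ↔ j = i + 1) := by
  obtain ⟨n, rfl⟩ : ∃ n, j = n + 1 := ⟨j - 1, by omega⟩
  obtain ⟨hnew, hadj, hnadj⟩ := hstep n _ _ (rayStates_fst_notMem_snd x₀ hstep n)
  obtain hin | rfl := Nat.lt_succ_iff_lt_or_eq.1 hij
  · have hmem : (rayStates step x₀ i).1 ∈ (rayStates step x₀ n).2 := by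
      rw [rayStates_snd]
      exact Finset.mem_image_of_mem _ (Finset.mem_range.2 hin)
    exact ⟨(ne_of_mem_of_not_mem (Finset.mem_insert_of_mem hmem) hnew).symm,
      iff_of_false (hnadj _ hmem) (by omega)⟩
  · exact ⟨(ne_of_mem_of_not_mem (Finset.mem_insert_self _ _) hnew).symm, iff_of_true hadj rfl⟩

end Ray

theorem HasExtensionProperty.exists_hasse_nat_embedding_separating [Countable V] [Nonempty V]
    (hG : G.HasExtensionProperty) :
    ∃ f : hasse ℕ ↪g G, ∀ u ∉ Set.range f, ∀ v ∉ Set.range f, u ≠ v →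
      ∃ r ∈ Set.range f, G.Adj r u ∧ ¬ G.Adj r v := by
  classical
  obtain ⟨p, hp⟩ := exists_surjective_nat (V × V)
  -- With `(u, v) = p n`, the vertex after `x` is joined to `x` and, if possible, to `u`, but
  -- neither to `v` nor to the earlier vertices `S`.
  choose step hnotA hnotB hA hB using fun n x (S : Finset V) =>
    hG.exists_adj_sdiff {x, (p n).1} ((insert (p n).2 S).erase x)
  have hstep : ∀ n x S, x ∉ S →
      step n x S ∉ insert x S ∧ G.Adj (step n x S) x ∧ ∀ s ∈ S, ¬ G.Adj (step n x S) s := by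
    intro n x S hx
    have hSB : ∀ s ∈ S, s ∈ (insert (p n).2 S).erase x := fun s hs =>
      Finset.mem_erase.2 ⟨ne_of_mem_of_not_mem hs hx, Finset.mem_insert_of_mem hs⟩
    refine ⟨?_, hA n x S x (by simp) (by simp), fun s hs => hB n x S s (hSB s hs)⟩
    rw [Finset.mem_insert, not_or]
    exact ⟨fun h => hnotA n x S (by simp [h]), fun h => hnotB n x S (hSB _ h)⟩
  let x₀ := Classical.arbitrary V
  refine ⟨hasseNatEmbedding _ fun i j => rayStates_fst_ne_and_adj_iff x₀ hstep, ?_⟩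
  rintro u hu v hv huv
  have hu' : ∀ k, (rayStates step x₀ k).1 ≠ u := fun k h => hu ⟨k, h⟩
  have hv' : ∀ k, v ≠ (rayStates step x₀ k).1 := fun k h => hv ⟨k, h.symm⟩
  obtain ⟨n, hn⟩ := hp (u, v)
  refine ⟨_, ⟨n + 1, rfl⟩, hA n _ _ u (by simp [hn]) ?_, hB n _ _ v ?_⟩
  · simp [hn, rayStates_snd, huv, hu', (hu' n).symm]
  · simp [hn, hv' n]

theorem HasExtensionProperty.exists_distinguishing_coloring [Countable V] [Nonempty V]
    (hG : G.HasExtensionProperty) :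
    ∃ c : V → Bool, ∀ g : G ≃g G, (∀ v, c (g v) = c v) → ∀ v, g v = v := by
  classical
  obtain ⟨f, hsep⟩ := hG.exists_hasse_nat_embedding_separating
  refine ⟨fun v => decide (v ∈ Set.range f), fun g hc => ?_⟩
  have hg : ∀ v, g v ∈ Set.range f ↔ v ∈ Set.range f := fun v => by simpa using hc v
  refine g.apply_eq_self_of_separating ?_ hg hsep
  rintro _ ⟨n, rfl⟩
  exact g.apply_hasse_nat_embedding_eq_self f hg n

def embeddingOfAdjIff (H : SimpleGraph W) (G : SimpleGraph V) :
    letI := H.structure; letI := G.structure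
    ∀ {S : Language.graph.Substructure W} (f : S → V), Injective f →
      (∀ x y : S, G.Adj (f x) (f y) ↔ H.Adj x y) → S ↪[Language.graph] V :=
  letI := H.structure; letI := G.structure
  fun f hf hadj =>
    { toFun := f, inj' := hf, map_rel' := by rintro _ ⟨⟩ x; exact hadj (x 0) (x 1) }

theorem HasExtensionProperty.isExtensionPair (H : SimpleGraph W) (hG : G.HasExtensionProperty) :
    let := H.structure; let := G.structure; Language.graph.IsExtensionPair W V := by
  let := H.structure; let := G.structure
  classical
  rw [isExtensionPair_iff_exists_embedding_closure_singleton_sup]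
  intro S S_fg f m
  have : Finite S := S_fg.finite
  obtain ⟨w, hw, hwadj⟩ := hG.exists_adj_iff f.injective fun s => H.Adj m s
  have hmem : ∀ x : ↥(closure Language.graph {m} ⊔ S), (x : W) ∉ S → (x : W) = m := by
    rintro ⟨x, hx⟩ hxS
    rw [← closure_eq (S := S), ← closure_insert, ← SetLike.mem_coe,
      closure_eq_of_isRelational] at hx
    exact (Set.mem_insert_iff.1 hx).resolve_right hxS
  let g : ↥(closure Language.graph {m} ⊔ S) → V := fun x =>
    if h : (x : W) ∈ S then f ⟨x, h⟩ else w
  refine ⟨embeddingOfAdjIff H G g ?_ ?_, ?_⟩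
  · intro x y hxy
    apply Subtype.ext
    by_cases hx : (x : W) ∈ S <;> by_cases hy : (y : W) ∈ S <;>
      simp only [g, hx, hy, dite_true, dite_false] at hxy
    · exact Subtype.mk.inj (f.injective hxy)
    · exact absurd ⟨_, hxy⟩ hw
    · exact absurd ⟨_, hxy.symm⟩ hw
    · rw [hmem x hx, hmem y hy]
  · intro x y
    by_cases hx : (x : W) ∈ S <;> by_cases hy : (y : W) ∈ S <;>
      simp only [g, hx, hy, dite_true, dite_false]
    · exact f.map_rel adj ![⟨x, hx⟩, ⟨y, hy⟩]
    · rw [hmem y hy, G.adj_comm, H.adj_comm]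
      exact hwadj ⟨x, hx⟩
    · rw [hmem x hx]
      exact hwadj ⟨y, hy⟩
    · simp only [hmem x hx, hmem y hy, G.irrefl, H.irrefl]
  · ext ⟨x, hx⟩
    exact (dif_pos hx : g ⟨x, _⟩ = _).symm

theorem HasExtensionProperty.exists_iso_apply_eq [Countable V] (hG : G.HasExtensionProperty)
    (a b : V) : ∃ g : G ≃g G, g a = b := by
  let := G.structure
  have homog : Language.graph.IsUltrahomogeneous V :=
    (isUltrahomogeneous_iff_IsExtensionPair cg_of_countable).2 (hG.isExtensionPair G)
  let S := closure Language.graph {a}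
  have hS : ∀ x : S, (x : V) = a := fun ⟨x, hx⟩ => by
    rwa [← SetLike.mem_coe, closure_eq_of_isRelational, Set.mem_singleton_iff] at hx
  obtain ⟨g, hg⟩ := homog S (fg_closure_singleton a) (embeddingOfAdjIff G G (fun _ => b)
    (fun x y _ => Subtype.ext ((hS x).trans (hS y).symm)) fun x y => by simp [hS x, hS y])
  refine ⟨⟨g.toEquiv, fun {u v} => g.map_rel adj ![u, v]⟩, ?_⟩
  exact (congrArg (fun e => e ⟨a, subset_closure rfl⟩) hg).symm

end SimpleGraph

/-- A countably infinite graph with the extension property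
(the Rado graph) has distinguishing number 2. -/
theorem rado_graph_distinguishing_number_two
    (V : Type*) [Countable V] [Infinite V] (G : SimpleGraph V)
    (hext : ∀ A B : Finset V, Disjoint A B →
      ∃ v, v ∉ A ∧ v ∉ B ∧ (∀ a ∈ A, G.Adj v a) ∧ (∀ b ∈ B, ¬ G.Adj v b)) :
    (∃ c : V → Bool, ∀ g : G ≃g G, (∀ v, c (g v) = c v) → ∀ v, g v = v) ∧
    (∃ g : G ≃g G, ∃ v, g v ≠ v) := by
  have hG : G.HasExtensionProperty := hext
  obtain ⟨a, b, hab⟩ := exists_pair_ne V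
  obtain ⟨g, hg⟩ := hG.exists_iso_apply_eq a b
  exact ⟨hG.exists_distinguishing_coloring, g, a, hg ▸ hab.symm⟩
end

section
/- Let V be a countably infinite set and let H be a 3-uniform hypergraph on V (a collection of 3-element subsets of V) with the extension property: for every finite S ⊆ V and every set P of 2-element subsets of S there exists x ∈ V \ S such that for all distinct a, b ∈ S, the set {x,a,b} belongs to H iff {a,b} ∈ P. (Such a hypergraph is the universal homogeneous 3-uniform hypergraph.) Then its distinguishing number is 2: there exists a coloring c : V → Bool such that the only automorphism g of H with c ∘ g = c is the identity, while H does have a nontrivial automorphism. -/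
/-!
Colour black the terms of a sequence `b`, built with the extension property so that the edges
among black vertices are exactly the triangles `{b 0, b j, b (j + 1)}`, `j ≥ 1`, of a fan, and so
that, for an enumeration `e` of the vertices, a white vertex `e k` and `b 0, b m` with
`k ≤ m`, `m ≠ 0` form an edge only when `m = k`. The fan is rigid, so an automorphism
preserving the colouring fixes every black vertex, and then the edges through `b 0` and
`b (max k l)` separate any two white vertices `e k ≠ e l`.

A nontrivial automorphism comes from the back-and-forth method: the extension property extends
every finite partial isomorphism forth and back, so `a ↦ b` with `a ≠ b` extends to an
automorphism.
-/

open Finset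

namespace UniversalHypergraph

variable {V W : Type*}

def IsThreeUniform (H : Set (Finset V)) : Prop := ∀ e ∈ H, e.card = 3

def HasExtensionProperty [DecidableEq V] (H : Set (Finset V)) : Prop :=
  ∀ S : Finset V, ∀ P : Set (Finset V), (∀ p ∈ P, p ⊆ S ∧ p.card = 2) →
    ∃ x, x ∉ S ∧ ∀ a ∈ S, ∀ b ∈ S, a ≠ b →
      (({x, a, b} : Finset V) ∈ H ↔ ({a, b} : Finset V) ∈ P)

def IsIso [DecidableEq W] (H : Set (Finset V)) (H' : Set (Finset W)) (g : V ≃ W) : Prop :=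
  ∀ e : Finset V, e.card = 3 → (e ∈ H ↔ e.image g ∈ H')

variable {H : Set (Finset V)} {H' : Set (Finset W)}

theorem IsIso.mem_iff [DecidableEq W] (h3 : IsThreeUniform H) (h3' : IsThreeUniform H')
    {g : V ≃ W} (hg : IsIso H H' g) (e : Finset V) : e ∈ H ↔ e.image g ∈ H' := by
  by_cases he : e.card = 3
  · exact hg e he
  · have he' : (e.image g).card ≠ 3 := by rwa [card_image_of_injective _ g.injective]
    exact iff_of_false (fun h => he (h3 e h)) (fun h => he' (h3' _ h))

theorem IsIso.symm [DecidableEq V] [DecidableEq W] (h3 : IsThreeUniform H)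
    (h3' : IsThreeUniform H') {g : V ≃ W} (hg : IsIso H H' g) : IsIso H' H g.symm := fun e _ => by
  rw [hg.mem_iff h3 h3', image_image, Equiv.self_comp_symm, image_id]

theorem HasExtensionProperty.exists_insert_mem_iff [DecidableEq V]
    (hext : HasExtensionProperty H) (S : Finset V) (P : Set (Finset V)) :
    ∃ x ∉ S, ∀ u ⊆ S, u.card = 2 → (insert x u ∈ H ↔ u ∈ P) := by
  obtain ⟨x, hxS, hx⟩ := hext S {u | u ∈ P ∧ u ⊆ S ∧ u.card = 2} fun _ hp => hp.2
  refine ⟨x, hxS, fun u huS hu => ?_⟩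
  obtain ⟨a, b, hab, rfl⟩ := card_eq_two.1 hu
  rw [hx a (huS (by simp)) b (huS (by simp)) hab]
  exact ⟨fun h => h.1, fun h => ⟨h, huS, hu⟩⟩

section PartialIso

variable [DecidableEq V] [DecidableEq W]

/-- A finite partial isomorphism, given by its graph. -/
structure IsPartialIso (H : Set (Finset V)) (H' : Set (Finset W)) (f : Finset (V × W)) : Prop where
  injOn_fst : Set.InjOn Prod.fst (f : Set (V × W))
  injOn_snd : Set.InjOn Prod.snd (f : Set (V × W))
  image_fst_mem_iff : ∀ s ⊆ f, (s.image Prod.fst ∈ H ↔ s.image Prod.snd ∈ H')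

theorem IsPartialIso.image_swap {f : Finset (V × W)} (hf : IsPartialIso H H' f) :
    IsPartialIso H' H (f.image Prod.swap) := by
  refine ⟨?_, ?_, fun s hs => ?_⟩
  · rw [coe_image]; exact Set.InjOn.image_of_comp hf.injOn_snd
  · rw [coe_image]; exact Set.InjOn.image_of_comp hf.injOn_fst
  · obtain ⟨t, ht, rfl⟩ := subset_image_iff.1 hs
    simp only [image_image]
    exact (hf.image_fst_mem_iff t ht).symm

theorem isPartialIso_singleton (h3 : IsThreeUniform H) (h3' : IsThreeUniform H') (a : V)
    (b : W) : IsPartialIso H H' {(a, b)} := by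
  refine ⟨by simp, by simp, fun s hs => iff_of_false (fun h => ?_) (fun h => ?_)⟩
  · have := (h3 _ h).symm.trans_le (card_image_le.trans (card_le_card hs)); simp at this
  · have := (h3' _ h).symm.trans_le (card_image_le.trans (card_le_card hs)); simp at this

theorem IsPartialIso.exists_insert_left (h3 : IsThreeUniform H) (h3' : IsThreeUniform H')
    (hext' : HasExtensionProperty H') {f : Finset (V × W)} (hf : IsPartialIso H H' f) (a : V) :
    ∃ b, IsPartialIso H H' (insert (a, b) f) := by
  by_cases ha : a ∈ f.image Prod.fst
  · obtain ⟨⟨a', b⟩, hab, rfl⟩ := mem_image.1 ha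
    exact ⟨b, by rwa [insert_eq_of_mem hab]⟩
  obtain ⟨x, hxS, hx⟩ := hext'.exists_insert_mem_iff (f.image Prod.snd)
    {u | ∃ t ⊆ f, t.image Prod.snd = u ∧ insert a (t.image Prod.fst) ∈ H}
  have hnew : (a, x) ∉ f := fun h => ha (mem_image_of_mem _ h)
  refine ⟨x, ?_, ?_, fun s hs => ?_⟩
  · rw [coe_insert, Set.injOn_insert (by exact_mod_cast hnew)]
    exact ⟨hf.injOn_fst, fun ⟨p, hp, hpa⟩ => ha (mem_image.2 ⟨p, hp, hpa⟩)⟩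
  · rw [coe_insert, Set.injOn_insert (by exact_mod_cast hnew)]
    exact ⟨hf.injOn_snd, fun ⟨p, hp, hpx⟩ => hxS (mem_image.2 ⟨p, hp, hpx⟩)⟩
  by_cases hax : (a, x) ∈ s
  swap
  · exact hf.image_fst_mem_iff s ((subset_insert_iff_of_notMem hax).1 hs)
  set t := s.erase (a, x)
  have ht : t ⊆ f := fun p hp => by
    have := hs (mem_of_mem_erase hp); rw [mem_insert] at this
    exact this.resolve_left (ne_of_mem_erase hp)
  have hcard₁ : (t.image Prod.fst).card = t.card := card_image_of_injOn (hf.injOn_fst.mono ht)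
  have hcard₂ : (t.image Prod.snd).card = t.card := card_image_of_injOn (hf.injOn_snd.mono ht)
  have ha_t : a ∉ t.image Prod.fst := fun h => ha (image_subset_image ht h)
  have hx_t : x ∉ t.image Prod.snd := fun h => hxS (image_subset_image ht h)
  have hTS : t.image Prod.snd ⊆ f.image Prod.snd := image_subset_image ht
  rw [← insert_erase hax, image_insert, image_insert]
  constructor
  · intro hH
    have h2 := h3 _ hH
    rw [card_insert_of_notMem ha_t, hcard₁] at h2
    exact (hx _ hTS (by omega)).2 ⟨t, ht, rfl, hH⟩
  · intro hH
    have h2 := h3' _ hH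
    rw [card_insert_of_notMem hx_t] at h2
    obtain ⟨t', ht', heq, hH'⟩ := (hx _ hTS (by omega)).1 hH
    have : t' = t := by
      have := (hf.injOn_snd.image_eq_image_iff (coe_subset.2 ht') (coe_subset.2 ht)).1
        (by simpa only [coe_image] using congrArg ((↑) : Finset W → Set W) heq)
      exact_mod_cast this
    rwa [this] at hH'

theorem IsPartialIso.exists_insert_right (h3 : IsThreeUniform H) (h3' : IsThreeUniform H')
    (hext : HasExtensionProperty H) {f : Finset (V × W)} (hf : IsPartialIso H H' f) (b : W) :
    ∃ a, IsPartialIso H H' (insert (a, b) f) := by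
  obtain ⟨a, ha⟩ := hf.image_swap.exists_insert_left h3' h3 hext b
  refine ⟨a, ?_⟩
  simpa [image_insert, image_image] using ha.image_swap

theorem exists_subset_of_forall_mem_ideal {α : Type*} [DecidableEq α] {p : Finset α → Prop}
    (I : Order.Ideal {f // p f}) (s : Finset α) (hs : ∀ a ∈ s, ∃ f ∈ I, a ∈ f.1) :
    ∃ f ∈ I, s ⊆ f.1 := by
  induction s using Finset.induction_on with
  | empty =>
    obtain ⟨f, hf⟩ := I.nonempty
    exact ⟨f, hf, empty_subset _⟩
  | insert a s _ ih =>
    obtain ⟨f₁, hf₁, ha⟩ := hs a (mem_insert_self a s)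
    obtain ⟨f₂, hf₂, hs₂⟩ := ih fun q hq => hs q (mem_insert_of_mem hq)
    obtain ⟨f, hf, h₁, h₂⟩ := I.directed f₁ hf₁ f₂ hf₂
    exact ⟨f, hf, insert_subset (h₁ ha) (hs₂.trans h₂)⟩

theorem exists_isIso_of_ideal (I : Order.Ideal {f : Finset (V × W) // IsPartialIso H H' f})
    (hleft : ∀ a, ∃ b, ∃ f ∈ I, (a, b) ∈ f.1) (hright : ∀ b, ∃ a, ∃ f ∈ I, (a, b) ∈ f.1) :
    ∃ g : V ≃ W, IsIso H H' g ∧ ∀ f ∈ I, ∀ p ∈ f.1, g p.1 = p.2 := by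
  have hpair : ∀ p q : V × W, (∃ f ∈ I, p ∈ f.1) → (∃ f ∈ I, q ∈ f.1) →
      ∃ f ∈ I, p ∈ f.1 ∧ q ∈ f.1 := fun p q hp hq => by
    obtain ⟨f, hf, hpq⟩ := exists_subset_of_forall_mem_ideal I {p, q} fun r hr => by
      rcases mem_insert.1 hr with rfl | hr
      · exact hp
      · exact mem_singleton.1 hr ▸ hq
    exact ⟨f, hf, hpq (by simp), hpq (by simp)⟩
  have hfun : ∀ a b b', (∃ f ∈ I, (a, b) ∈ f.1) → (∃ f ∈ I, (a, b') ∈ f.1) → b = b' :=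
    fun a b b' hb hb' => by
      obtain ⟨f, -, h, h'⟩ := hpair _ _ hb hb'
      exact congrArg Prod.snd (f.2.injOn_fst h h' rfl)
  choose g hg using hleft
  have hinj : Function.Injective g := fun a a' h => by
    obtain ⟨f, -, h₁, h₂⟩ := hpair _ _ (hg a) (h ▸ hg a')
    exact congrArg Prod.fst (f.2.injOn_snd h₁ h₂ rfl)
  have hsurj : Function.Surjective g := fun b => by
    obtain ⟨a, ha⟩ := hright b
    exact ⟨a, hfun a _ _ (hg a) ha⟩
  refine ⟨Equiv.ofBijective g ⟨hinj, hsurj⟩, fun e _ => ?_,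
    fun f hf p hp => hfun p.1 _ _ (hg p.1) ⟨f, hf, hp⟩⟩
  obtain ⟨f, -, hef⟩ := exists_subset_of_forall_mem_ideal I (e.image fun a => (a, g a))
    (by simpa using fun a _ => hg a)
  show e ∈ H ↔ e.image g ∈ H'
  simpa [image_image, Function.comp_def] using f.2.image_fst_mem_iff _ hef

theorem exists_isIso_extending [Countable V] [Countable W] (h3 : IsThreeUniform H)
    (h3' : IsThreeUniform H') (hext : HasExtensionProperty H) (hext' : HasExtensionProperty H')
    {f : Finset (V × W)} (hf : IsPartialIso H H' f) :
    ∃ g : V ≃ W, IsIso H H' g ∧ ∀ p ∈ f, g p.1 = p.2 := by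
  let _ := Encodable.ofCountable V
  let _ := Encodable.ofCountable W
  let D : V ⊕ W → Order.Cofinal {f : Finset (V × W) // IsPartialIso H H' f}
    | .inl a => ⟨{f | ∃ b, (a, b) ∈ f.1}, fun f =>
        let ⟨b, hb⟩ := f.2.exists_insert_left h3 h3' hext' a
        ⟨⟨_, hb⟩, ⟨b, mem_insert_self _ _⟩, subset_insert _ _⟩⟩
    | .inr b => ⟨{f | ∃ a, (a, b) ∈ f.1}, fun f =>
        let ⟨a, ha⟩ := f.2.exists_insert_right h3 h3' hext b
        ⟨⟨_, ha⟩, ⟨a, mem_insert_self _ _⟩, subset_insert _ _⟩⟩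
  let I := Order.idealOfCofinals ⟨f, hf⟩ D
  obtain ⟨g, hg, hgI⟩ := exists_isIso_of_ideal I
    (fun a => let ⟨f, ⟨b, hb⟩, hfI⟩ := Order.cofinal_meets_idealOfCofinals _ D (.inl a)
      ⟨b, f, hfI, hb⟩)
    (fun b => let ⟨f, ⟨a, ha⟩, hfI⟩ := Order.cofinal_meets_idealOfCofinals _ D (.inr b)
      ⟨a, f, hfI, ha⟩)
  exact ⟨g, hg, hgI _ (Order.mem_idealOfCofinals _ D)⟩

end PartialIso

theorem exists_isIso_apply_ne [DecidableEq V] [Countable V] [Infinite V] {H : Set (Finset V)}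
    (h3 : IsThreeUniform H) (hext : HasExtensionProperty H) :
    ∃ g : V ≃ V, IsIso H H g ∧ ∃ v, g v ≠ v := by
  obtain ⟨a, b, hab⟩ := exists_pair_ne V
  obtain ⟨g, hg, hgab⟩ :=
    exists_isIso_extending h3 h3 hext hext (isPartialIso_singleton h3 h3 a b)
  exact ⟨g, hg, a, hgab (a, b) (mem_singleton_self _) ▸ hab.symm⟩

def fan : Set (Finset ℕ) := {s | ∃ j, 0 < j ∧ s = {0, j, j + 1}}

theorem isThreeUniform_fan : IsThreeUniform fan := by
  rintro _ ⟨j, hj, rfl⟩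
  exact card_eq_three.2 ⟨0, j, j + 1, by omega, by omega, by omega, rfl⟩

theorem zero_mem_of_mem_fan {s : Finset ℕ} (hs : s ∈ fan) : 0 ∈ s := by
  obtain ⟨j, -, rfl⟩ := hs
  exact mem_insert_self _ _

theorem insert_zero_mem_fan_iff {i j : ℕ} :
    ({0, i, j} : Finset ℕ) ∈ fan ↔ 0 < i ∧ j = i + 1 ∨ 0 < j ∧ i = j + 1 := by
  constructor
  · rintro ⟨k, hk, heq⟩
    have h := fun x => (Finset.ext_iff.1 heq x)
    simp only [mem_insert, mem_singleton] at h
    have := h i; have := h j; have := h k; have := h (k + 1)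
    omega
  · rintro (⟨hi, rfl⟩ | ⟨hj, rfl⟩)
    · exact ⟨i, hi, rfl⟩
    · exact ⟨j, hj, by ext; simp only [mem_insert, mem_singleton]; omega⟩

theorem insert_mem_fan_iff {k : ℕ} {t : Finset ℕ} (ht : t ⊆ range k) (ht2 : t.card = 2) :
    insert k t ∈ fan ↔ t = {0, k - 1} := by
  have hlt : ∀ x ∈ t, x < k := fun x hx => mem_range.1 (ht hx)
  constructor
  · rintro ⟨j, hj, heq⟩
    have h := fun x => (Finset.ext_iff.1 heq x)
    simp only [mem_insert, mem_singleton] at h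
    have hk : k = j + 1 := by
      have := h k; have := h (j + 1); have := hlt (j + 1); grind
    ext x
    have := h x; have := hlt x; simp only [mem_insert, mem_singleton]; grind
  · rintro rfl
    have : k - 1 ≠ 0 := fun h => by simp [h] at ht2
    exact ⟨k - 1, by omega, by ext; simp only [mem_insert, mem_singleton]; omega⟩

theorem eq_refl_of_isIso_fan {σ : ℕ ≃ ℕ} (hσ : IsIso fan fan σ) : σ = Equiv.refl ℕ := by
  have h3 := isThreeUniform_fan
  -- `0` is the only vertex lying in every edge of the fan.
  have h0 : σ 0 = 0 := by
    have hmem : ∀ s ∈ fan, σ 0 ∈ s := fun s hs => by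
      obtain ⟨x, hx, hx0⟩ := mem_image.1 <| zero_mem_of_mem_fan <|
        ((hσ.symm h3 h3).mem_iff h3 h3 s).1 hs
      rwa [← hx0, Equiv.apply_symm_apply]
    have h₁ := hmem {0, 1, 2} ⟨1, one_pos, rfl⟩
    have h₂ := hmem {0, 3, 4} ⟨3, by norm_num, rfl⟩
    simp only [mem_insert, mem_singleton] at h₁ h₂
    omega
  have hadj : ∀ i j, (0 < i ∧ j = i + 1 ∨ 0 < j ∧ i = j + 1) ↔
      (0 < σ i ∧ σ j = σ i + 1 ∨ 0 < σ j ∧ σ i = σ j + 1) := fun i j => by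
    rw [← insert_zero_mem_fan_iff, ← insert_zero_mem_fan_iff, hσ.mem_iff h3 h3]
    simp [image_insert, h0]
  -- In the link of `0`, a path on the positive integers, `1` is the only vertex of degree one.
  have h1 : σ 1 = 1 := by
    by_contra hne
    have hpos : σ 1 ≠ 0 := fun h => by have := σ.injective (h.trans h0.symm); omega
    set m := σ 1
    have hnext := (hadj 1 (σ.symm (m + 1))).2 (by simp only [Equiv.apply_symm_apply]; omega)
    have hprev := (hadj 1 (σ.symm (m - 1))).2 (by simp only [Equiv.apply_symm_apply]; omega)
    have e₁ : σ.symm (m + 1) = 2 := by omega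
    have e₂ : σ.symm (m - 1) = 2 := by omega
    have := σ.symm.injective (e₁.trans e₂.symm)
    omega
  have hstep : ∀ k, σ k = k ∧ σ (k + 1) = k + 1 := fun k => by
    induction k with
    | zero => exact ⟨h0, h1⟩
    | succ k ih =>
      refine ⟨ih.2, show σ (k + 2) = k + 2 from ?_⟩
      have h := (hadj (k + 1) (k + 2)).1 (by omega)
      have hne : σ (k + 2) ≠ σ k := fun h => by have := σ.injective h; omega
      omega
  exact Equiv.ext fun k => (hstep k).1

theorem exists_seq_of_forall_exists_next {α : Type*} [Nonempty α] (P : ℕ → (ℕ → α) → α → Prop)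
    (hP : ∀ n f g, (∀ m < n, f m = g m) → P n f = P n g) (h : ∀ n f, ∃ a, P n f a) :
    ∃ b : ℕ → α, ∀ n, P n b (b n) := by
  choose next hnext using h
  let pre : ℕ → ℕ → α := fun n =>
    Nat.rec (fun _ => Classical.arbitrary α) (fun k f => Function.update f k (next k f)) n
  have hpre : ∀ n, ∀ m < n, pre n m = next m (pre m) := fun n => by
    induction n with
    | zero => intro m hm; omega
    | succ n ih =>
      intro m hm
      rcases Nat.lt_succ_iff_lt_or_eq.1 hm with hm | rfl
      · simp only [pre, Function.update_of_ne hm.ne]; exact ih m hm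
      · simp [pre]
  exact ⟨fun n => next n (pre n), fun n => hP n _ _ (hpre n) ▸ hnext n (pre n)⟩

section MarkedFan

variable [DecidableEq V] (H) (e : ℕ ≃ V)

def markedSupport (f : ℕ → V) (n : ℕ) : Finset V :=
  (range n).image f ∪ (range (n + 1)).image e

def markedPairs (f : ℕ → V) (n : ℕ) : Set (Finset V) :=
  {u | n ≠ 0 ∧ (u = {f 0, f (n - 1)} ∨ e n ∉ (range n).image f ∧ u = {f 0, e n})}

/-- The pair `{f 0, f (n - 1)}` grows the fan; the pair `{f 0, e n}`, offered only while `e n`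
is not a fan vertex, makes `x` the marker of `e n`. -/
def IsMarkedFanStep (f : ℕ → V) (n : ℕ) (x : V) : Prop :=
  x ∉ markedSupport e f n ∧
    ∀ u ⊆ markedSupport e f n, u.card = 2 → (insert x u ∈ H ↔ u ∈ markedPairs e f n)

def IsMarkedFan (b : ℕ → V) : Prop := ∀ n, IsMarkedFanStep H e b n (b n)

variable {H}

theorem exists_isMarkedFan [Nonempty V] (hext : HasExtensionProperty H) :
    ∃ b : ℕ → V, IsMarkedFan H e b := by
  refine exists_seq_of_forall_exists_next (fun n f x => IsMarkedFanStep H e f n x)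
    (fun n f g hfg => ?_) fun n f => hext.exists_insert_mem_iff _ _
  have himage : (range n).image f = (range n).image g :=
    image_congr fun m hm => hfg m (mem_range.1 hm)
  have hpairs : markedPairs e f n = markedPairs e g n := by
    rcases Nat.eq_zero_or_pos n with rfl | hn
    · simp [markedPairs]
    · simp only [markedPairs, hfg 0 hn, hfg (n - 1) (by omega), himage]
  funext x
  simp only [IsMarkedFanStep, markedSupport, himage, hpairs]

variable {e} {b : ℕ → V}

theorem IsMarkedFan.injective (hb : IsMarkedFan H e b) : Function.Injective b :=
  Function.Injective.of_lt_imp_ne fun _ n hmn h =>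
    (hb n).1 (h ▸ mem_union_left _ (mem_image_of_mem b (mem_range.2 hmn)))

theorem IsMarkedFan.image_mem_iff_mem_fan (hb : IsMarkedFan H e b) {s : Finset ℕ}
    (hs : s.card = 3) : s.image b ∈ H ↔ s ∈ fan := by
  have hne : s.Nonempty := card_pos.1 (by omega)
  set k := s.max' hne
  have ht : s.erase k ⊆ range k := fun x hx => mem_range.2 (s.lt_max'_of_mem_erase_max' hne hx)
  have ht2 : (s.erase k).card = 2 := by rw [card_erase_of_mem (s.max'_mem hne)]; omega
  have hk : k ≠ 0 := by
    have := card_le_card ht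
    rw [card_range, ht2] at this
    omega
  have hbt : (s.erase k).image b ⊆ (range k).image b := image_subset_image ht
  rw [← insert_erase (s.max'_mem hne), image_insert, insert_mem_fan_iff ht ht2,
    (hb k).2 _ (hbt.trans subset_union_left)
      (by rw [card_image_of_injective _ hb.injective, ht2])]
  have hpair : ({b 0, b (k - 1)} : Finset V) = ({0, k - 1} : Finset ℕ).image b := by
    simp [image_insert]
  simp only [markedPairs, Set.mem_ofPred_eq, hpair, (image_injective hb.injective).eq_iff]
  refine ⟨fun ⟨_, h⟩ => h.resolve_right fun ⟨hek, heq⟩ => hek (hbt ?_), fun h => ⟨hk, .inl h⟩⟩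
  rw [heq]; simp

theorem IsMarkedFan.insert_mem_iff (hb : IsMarkedFan H e b) {k m : ℕ} (hk : e k ∉ Set.range b)
    (hkm : k ≤ m) (hm : m ≠ 0) : ({b m, b 0, e k} : Finset V) ∈ H ↔ m = k := by
  have hb0 : b 0 ≠ e k := fun h => hk ⟨0, h⟩
  have hsupp : ({b 0, e k} : Finset V) ⊆ markedSupport e b m :=
    insert_subset (mem_union_left _ (mem_image_of_mem b (mem_range.2 (by omega))))
      (singleton_subset_iff.2 (mem_union_right _ (mem_image_of_mem e (mem_range.2 (by omega)))))
  rw [(hb m).2 _ hsupp (card_pair hb0)]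
  simp only [markedPairs, Set.mem_ofPred_eq]
  constructor
  · rintro ⟨-, h | ⟨-, h⟩⟩
    · have : e k ∈ ({b 0, b (m - 1)} : Finset V) := h ▸ by simp
      simp only [mem_insert, mem_singleton] at this
      exact (this.elim (fun h => hb0 h.symm) fun h => hk ⟨m - 1, h.symm⟩).elim
    · have : e k ∈ ({b 0, e m} : Finset V) := h ▸ by simp
      simp only [mem_insert, mem_singleton, EmbeddingLike.apply_eq_iff_eq] at this
      exact (this.resolve_left hb0.symm).symm
  · rintro rfl
    refine ⟨hm, .inr ⟨fun h => ?_, rfl⟩⟩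
    obtain ⟨i, -, hi⟩ := mem_image.1 h
    exact hk ⟨i, hi⟩

theorem IsMarkedFan.apply_eq_self_of_mem_range (hb : IsMarkedFan H e b) (h3 : IsThreeUniform H)
    {g : V ≃ V} (hg : IsIso H H g) (hc : ∀ v, g v ∈ Set.range b ↔ v ∈ Set.range b) (n : ℕ) :
    g (b n) = b n := by
  let σ : ℕ ≃ ℕ := (Equiv.ofInjective b hb.injective).trans
    ((g.subtypeEquiv fun v => (hc v).symm).trans (Equiv.ofInjective b hb.injective).symm)
  have hσ : ∀ m, b (σ m) = g (b m) := fun m => by simp [σ, Equiv.apply_ofInjective_symm]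
  have hσfan : IsIso fan fan σ := fun s hs => by
    have hs' : (s.image σ).card = 3 := by rwa [card_image_of_injective _ σ.injective]
    rw [← hb.image_mem_iff_mem_fan hs, ← hb.image_mem_iff_mem_fan hs', hg.mem_iff h3 h3,
      image_image, image_image]
    simp [Function.comp_def, hσ]
  rw [← hσ, eq_refl_of_isIso_fan hσfan, Equiv.refl_apply]

theorem IsMarkedFan.apply_eq_self (hb : IsMarkedFan H e b) (h3 : IsThreeUniform H) {g : V ≃ V}
    (hg : IsIso H H g) (hc : ∀ v, g v ∈ Set.range b ↔ v ∈ Set.range b) (v : V) : g v = v := by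
  by_cases hv : v ∈ Set.range b
  · obtain ⟨n, rfl⟩ := hv
    exact hb.apply_eq_self_of_mem_range h3 hg hc n
  obtain ⟨k, rfl⟩ := e.surjective v
  obtain ⟨l, hl⟩ := e.surjective (g (e k))
  have hl_white : e l ∉ Set.range b := hl ▸ fun h => hv ((hc _).1 h)
  by_contra hne
  have hkl : k ≠ l := fun h => hne (by rw [← hl, h])
  have key : ({b (max k l), b 0, e k} : Finset V) ∈ H ↔
      ({b (max k l), b 0, e l} : Finset V) ∈ H := by
    rw [hg.mem_iff h3 h3]
    simp [image_insert, hb.apply_eq_self_of_mem_range h3 hg hc, hl]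
  rw [hb.insert_mem_iff hv (le_max_left _ _) (by omega),
    hb.insert_mem_iff hl_white (le_max_right _ _) (by omega)] at key
  omega

end MarkedFan

end UniversalHypergraph

/-- The universal homogeneous 3-uniform hypergraph has
distinguishing number 2. -/
theorem universal_three_uniform_hypergraph_distinguishing_number_two
    (V : Type*) [Countable V] [Infinite V] [DecidableEq V] (H : Set (Finset V))
    (h3 : ∀ e ∈ H, e.card = 3)
    (hext : ∀ S : Finset V, ∀ P : Set (Finset V), (∀ p ∈ P, p ⊆ S ∧ p.card = 2) →
      ∃ x, x ∉ S ∧ ∀ a ∈ S, ∀ b ∈ S, a ≠ b →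
        (({x, a, b} : Finset V) ∈ H ↔ ({a, b} : Finset V) ∈ P)) :
    (∃ c : V → Bool, ∀ g : V ≃ V,
        (∀ e : Finset V, e.card = 3 → (e ∈ H ↔ e.image g ∈ H)) →
        (∀ v, c (g v) = c v) → ∀ v, g v = v) ∧
    (∃ g : V ≃ V, (∀ e : Finset V, e.card = 3 → (e ∈ H ↔ e.image g ∈ H)) ∧
      ∃ v, g v ≠ v) := by
  classical
  obtain ⟨_⟩ := nonempty_denumerable V
  obtain ⟨b, hb⟩ := UniversalHypergraph.exists_isMarkedFan (Denumerable.eqv V).symm hext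
  refine ⟨⟨fun v => decide (v ∈ Set.range b), fun g hg hc => ?_⟩,
    UniversalHypergraph.exists_isIso_apply_ne h3 hext⟩
  exact hb.apply_eq_self h3 hg fun v => decide_eq_decide.1 (hc v)
end

section
/- Let (P, ≤) be a countably infinite partial order with the extension property: for all pairwise disjoint finite sets A, B, C ⊆ P such that a < b for all a ∈ A, b ∈ B, and ¬(c ≤ a) for all a ∈ A, c ∈ C, and ¬(b ≤ c) for all b ∈ B, c ∈ C, there exists x ∈ P \ (A ∪ B ∪ C) with a < x for all a ∈ A, x < b for all b ∈ B, and x incomparable to every c ∈ C. (Such a partial order is the universal homogeneous partial order ℙ.) Then its distinguishing number is 2: there exists a coloring c : P → Bool such that the only order automorphism g of P with c ∘ g = c is the identity, while P does have a nontrivial order automorphism. -/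
/-!
A nontrivial automorphism comes from back-and-forth: by the extension property every finite
partial isomorphism extends by any point on either side, so the partial isomorphism swapping two
incomparable points lies in a generic ideal (`Order.idealOfCofinals`) whose union is an
automorphism.

For the distinguishing colouring, enumerate all pairs `(x, y)` and colour blue the points of chains
`t m 0 < ⋯ < t m (2m+1)`, where chain `m` is incomparable to the earlier chains except that its top
may lie above their points, and the top of chain `m` lies above exactly one point of the `m`-th
pair when it has two. A colour-preserving automorphism fixes every blue point: the bottoms are the
blue points with no blue point below, and they are told apart by the number of blue points in
their cone (`2m+1` or `2m+2`); any other blue point is determined by the blue points below it.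
Fixing the top of chain `m`, it cannot map `x` to `y`.
-/

def ExtensionProperty (P : Type*) [PartialOrder P] : Prop :=
  ∀ A B C : Finset P, Disjoint A B → Disjoint A C → Disjoint B C →
    (∀ a ∈ A, ∀ b ∈ B, a < b) → (∀ a ∈ A, ∀ c ∈ C, ¬ c ≤ a) → (∀ b ∈ B, ∀ c ∈ C, ¬ b ≤ c) →
    ∃ x, x ∉ A ∧ x ∉ B ∧ x ∉ C ∧ (∀ a ∈ A, a < x) ∧ (∀ b ∈ B, x < b) ∧
      ∀ c ∈ C, x ≠ c ∧ ¬ x ≤ c ∧ ¬ c ≤ x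

def IsFinPartialIso {P : Type*} [PartialOrder P] (f : Finset (P × P)) : Prop :=
  ∀ p ∈ f, ∀ q ∈ f, p.1 ≤ q.1 ↔ p.2 ≤ q.2

abbrev FinPartialIso (P : Type*) [PartialOrder P] := {f : Finset (P × P) // IsFinPartialIso f}

section

variable {P : Type*} [PartialOrder P]

namespace IsFinPartialIso

variable {f : Finset (P × P)}

theorem image_swap [DecidableEq P] (hf : IsFinPartialIso f) :
    IsFinPartialIso (f.image Prod.swap) := by
  simp only [IsFinPartialIso, Finset.mem_image]
  rintro _ ⟨p, hp, rfl⟩ _ ⟨q, hq, rfl⟩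
  exact (hf p hp q hq).symm

theorem insert [DecidableEq P] (hf : IsFinPartialIso f) {a b : P}
    (hab : ∀ p ∈ f, (p.1 ≤ a ↔ p.2 ≤ b) ∧ (a ≤ p.1 ↔ b ≤ p.2)) :
    IsFinPartialIso (insert (a, b) f) := by
  simp only [IsFinPartialIso, Finset.mem_insert]
  rintro p (rfl | hp) q (rfl | hq)
  exacts [iff_of_true le_rfl le_rfl, (hab q hq).2, (hab p hp).1, hf p hp q hq]

theorem lt_iff (hf : IsFinPartialIso f) {p q : P × P} (hp : p ∈ f) (hq : q ∈ f) :
    p.1 < q.1 ↔ p.2 < q.2 := by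
  simp only [lt_iff_le_not_ge, hf p hp q hq, hf q hq p hp]

end IsFinPartialIso

namespace ExtensionProperty

variable (h : ExtensionProperty P)
include h

theorem exists_between_incomp (A B C : Finset P) (hAB : ∀ a ∈ A, ∀ b ∈ B, a < b)
    (hAC : ∀ a ∈ A, ∀ c ∈ C, ¬ c ≤ a) (hBC : ∀ b ∈ B, ∀ c ∈ C, ¬ b ≤ c) :
    ∃ x, (∀ a ∈ A, a < x) ∧ (∀ b ∈ B, x < b) ∧ ∀ c ∈ C, ¬ x ≤ c ∧ ¬ c ≤ x := by
  obtain ⟨x, -, -, -, hA, hB, hC⟩ := h A B C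
    (Finset.disjoint_left.2 fun a ha hb => lt_irrefl a (hAB a ha a hb))
    (Finset.disjoint_left.2 fun a ha hc => hAC a ha a hc le_rfl)
    (Finset.disjoint_left.2 fun b hb hc => hBC b hb b hc le_rfl) hAB hAC hBC
  exact ⟨x, hA, hB, fun c hc => (hC c hc).2⟩

theorem exists_incomp (C : Finset P) : ∃ x, ∀ c ∈ C, ¬ x ≤ c ∧ ¬ c ≤ x := by
  obtain ⟨x, -, -, hx⟩ := h.exists_between_incomp ∅ ∅ C (by simp) (by simp) (by simp)
  exact ⟨x, hx⟩

theorem nonempty : Nonempty P :=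
  (h.exists_incomp ∅).nonempty

theorem exists_across {f : Finset (P × P)} (hf : IsFinPartialIso f) (a : P) :
    ∃ b, ∀ p ∈ f, (p.1 ≤ a ↔ p.2 ≤ b) ∧ (a ≤ p.1 ↔ b ≤ p.2) := by
  classical
  by_cases hdom : ∃ b, (a, b) ∈ f
  · obtain ⟨b, hb⟩ := hdom
    exact ⟨b, fun p hp => ⟨hf p hp _ hb, hf _ hb p hp⟩⟩
  simp only [not_exists] at hdom
  have hne : ∀ p ∈ f, p.1 ≠ a := fun p hp hpa => hdom p.2 (hpa ▸ hp)
  obtain ⟨b, hA, hB, hC⟩ := h.exists_between_incomp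
    ((f.filter (·.1 < a)).image Prod.snd) ((f.filter (a < ·.1)).image Prod.snd)
    ((f.filter fun p => ¬ p.1 ≤ a ∧ ¬ a ≤ p.1).image Prod.snd)
    (by
      simp only [Finset.mem_image, Finset.mem_filter]
      rintro _ ⟨p, ⟨hp, hpa⟩, rfl⟩ _ ⟨q, ⟨hq, haq⟩, rfl⟩
      exact (hf.lt_iff hp hq).1 (hpa.trans haq))
    (by
      simp only [Finset.mem_image, Finset.mem_filter]
      rintro _ ⟨p, ⟨hp, hpa⟩, rfl⟩ _ ⟨q, ⟨hq, hqa, -⟩, rfl⟩ hqp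
      exact hqa (((hf q hq p hp).2 hqp).trans hpa.le))
    (by
      simp only [Finset.mem_image, Finset.mem_filter]
      rintro _ ⟨p, ⟨hp, hap⟩, rfl⟩ _ ⟨q, ⟨hq, -, haq⟩, rfl⟩ hpq
      exact haq (hap.le.trans ((hf p hp q hq).2 hpq)))
  refine ⟨b, fun p hp => ?_⟩
  have hA := fun hpa => hA p.2 (Finset.mem_image_of_mem _ (Finset.mem_filter.2 ⟨hp, hpa⟩))
  have hB := fun hap => hB p.2 (Finset.mem_image_of_mem _ (Finset.mem_filter.2 ⟨hp, hap⟩))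
  have hC := fun hpa => hC p.2 (Finset.mem_image_of_mem _ (Finset.mem_filter.2 ⟨hp, hpa⟩))
  by_cases hpa : p.1 ≤ a
  · have hpa := lt_of_le_of_ne hpa (hne p hp)
    exact ⟨iff_of_true hpa.le (hA hpa).le, iff_of_false hpa.not_ge (hA hpa).not_ge⟩
  by_cases hap : a ≤ p.1
  · have hap := lt_of_le_of_ne hap (hne p hp).symm
    exact ⟨iff_of_false hap.not_ge (hB hap).not_ge, iff_of_true hap.le (hB hap).le⟩
  exact ⟨iff_of_false hpa (hC ⟨hpa, hap⟩).2, iff_of_false hap (hC ⟨hpa, hap⟩).1⟩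

theorem exists_across_swap {f : Finset (P × P)} (hf : IsFinPartialIso f) (b : P) :
    ∃ a, ∀ p ∈ f, (p.1 ≤ a ↔ p.2 ≤ b) ∧ (a ≤ p.1 ↔ b ≤ p.2) := by
  classical
  obtain ⟨a, ha⟩ := h.exists_across hf.image_swap b
  exact ⟨a, fun p hp => by
    simpa only [Prod.fst_swap, Prod.snd_swap, Iff.comm] using
      ha p.swap (Finset.mem_image_of_mem _ hp)⟩

def definedAtLeft (a : P) : Order.Cofinal (FinPartialIso P) where
  carrier := {f | ∃ b, (a, b) ∈ f.1}
  isCofinal f := by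
    classical
    obtain ⟨b, hb⟩ := h.exists_across f.2 a
    exact ⟨⟨_, f.2.insert hb⟩, ⟨b, Finset.mem_insert_self _ _⟩, Finset.subset_insert _ _⟩

def definedAtRight (b : P) : Order.Cofinal (FinPartialIso P) where
  carrier := {f | ∃ a, (a, b) ∈ f.1}
  isCofinal f := by
    classical
    obtain ⟨a, ha⟩ := h.exists_across_swap f.2 b
    exact ⟨⟨_, f.2.insert ha⟩, ⟨a, Finset.mem_insert_self _ _⟩, Finset.subset_insert _ _⟩

omit h in
theorem le_iff_of_mem_ideal {I : Order.Ideal (FinPartialIso P)} {f f' : FinPartialIso P}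
    (hf : f ∈ I) (hf' : f' ∈ I) {p q : P × P} (hp : p ∈ f.1) (hq : q ∈ f'.1) :
    p.1 ≤ q.1 ↔ p.2 ≤ q.2 := by
  obtain ⟨g, -, hfg, hf'g⟩ := I.directed f hf f' hf'
  exact g.2 p (hfg hp) q (hf'g hq)

omit h in
theorem eq_iff_of_mem_ideal {I : Order.Ideal (FinPartialIso P)} {f f' : FinPartialIso P}
    (hf : f ∈ I) (hf' : f' ∈ I) {p q : P × P} (hp : p ∈ f.1) (hq : q ∈ f'.1) :
    p.1 = q.1 ↔ p.2 = q.2 := by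
  simp only [le_antisymm_iff, le_iff_of_mem_ideal hf hf' hp hq, le_iff_of_mem_ideal hf' hf hq hp]

theorem exists_orderIso_extending [Countable P] (f : FinPartialIso P) :
    ∃ g : P ≃o P, ∀ p ∈ f.1, g p.1 = p.2 := by
  have := Encodable.ofCountable P
  let D := Sum.elim h.definedAtLeft h.definedAtRight
  let I := Order.idealOfCofinals f D
  have hl (a : P) : ∃ b, ∃ f ∈ I, (a, b) ∈ f.1 := by
    obtain ⟨f, ⟨b, hb⟩, hf⟩ := Order.cofinal_meets_idealOfCofinals f D (.inl a)
    exact ⟨b, f, hf, hb⟩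
  have hr (b : P) : ∃ a, ∃ f ∈ I, (a, b) ∈ f.1 := by
    obtain ⟨f, ⟨a, ha⟩, hf⟩ := Order.cofinal_meets_idealOfCofinals f D (.inr b)
    exact ⟨a, f, hf, ha⟩
  choose F fF hfF hF using hl
  have hF_le (a a' : P) : F a ≤ F a' ↔ a ≤ a' :=
    (le_iff_of_mem_ideal (hfF a) (hfF a') (hF a) (hF a')).symm
  have hF_surj : Function.Surjective F := fun b => by
    obtain ⟨a, f', hf', ha⟩ := hr b
    exact ⟨a, (eq_iff_of_mem_ideal (hfF a) hf' (hF a) ha).1 rfl⟩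
  refine ⟨RelIso.ofSurjective (OrderEmbedding.ofMapLEIff F hF_le) hF_surj, fun p hp => ?_⟩
  exact (eq_iff_of_mem_ideal (hfF p.1) (Order.mem_idealOfCofinals f D) (hF p.1) hp).1 rfl

theorem exists_orderIso_ne [Countable P] : ∃ g : P ≃o P, ∃ a, g a ≠ a := by
  classical
  obtain ⟨a, -⟩ := h.exists_incomp ∅
  obtain ⟨b, hb⟩ := h.exists_incomp {a}
  obtain ⟨hba, hab⟩ := hb a (Finset.mem_singleton_self a)
  have hswap : IsFinPartialIso {(a, b), (b, a)} := by
    simp only [IsFinPartialIso, Finset.mem_insert, Finset.mem_singleton]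
    rintro p (rfl | rfl) q (rfl | rfl)
    exacts [iff_of_true le_rfl le_rfl, iff_of_false hab hba, iff_of_false hba hab,
      iff_of_true le_rfl le_rfl]
  obtain ⟨g, hg⟩ := h.exists_orderIso_extending ⟨_, hswap⟩
  exact ⟨g, a, fun hga => hba ((hg (a, b) (by simp)).symm.trans hga).le⟩

theorem exists_chain_below {F : Finset P} {w : P} (hw : ∀ q ∈ F, ¬ w ≤ q) (n : ℕ) :
    ∃ c : ℕ → P, c n = w ∧ StrictMonoOn c (Set.Iic n) ∧
      ∀ i < n, ∀ q ∈ F, ¬ c i ≤ q ∧ ¬ q ≤ c i := by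
  classical
  induction n with
  | zero => exact ⟨fun _ => w, rfl, fun i hi j hj hij => by simp_all, by simp⟩
  | succ n ih =>
    obtain ⟨c, hcn, hmono, hinc⟩ := ih
    obtain ⟨x, -, hxc, hxF⟩ := h.exists_between_incomp ∅ ((Finset.range (n + 1)).image c) F
      (by simp) (by simp)
      (by
        simp only [Finset.mem_image, Finset.mem_range]
        rintro _ ⟨i, hi, rfl⟩ q hq
        rcases (Nat.lt_succ_iff.1 hi).lt_or_eq with hi | rfl
        exacts [(hinc i hi q hq).1, hcn ▸ hw q hq])
    have hxc (i : ℕ) (hi : i ≤ n) : x < c i :=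
      hxc _ (Finset.mem_image_of_mem _ (Finset.mem_range.2 (Nat.lt_succ_of_le hi)))
    refine ⟨fun | 0 => x | i + 1 => c i, hcn, ?_, ?_⟩
    · rintro (_ | i) hi (_ | j) hj hij
      · exact absurd hij (lt_irrefl 0)
      · exact hxc j (Nat.le_of_succ_le_succ hj)
      · exact absurd hij (Nat.not_lt_zero _)
      · exact hmono (Nat.le_of_succ_le_succ hi) (Nat.le_of_succ_le_succ hj)
          (Nat.lt_of_succ_lt_succ hij)
    · rintro (_ | i) hi
      exacts [hxF, hinc i (Nat.lt_of_succ_lt_succ hi)]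

-- points of `F` below `v` cannot lie above `w`; the others are made incomparable to `w`
theorem exists_gt_not_le_of_not_le (F : Finset P) {u v : P} (huv : ¬ u ≤ v) :
    ∃ w, (∀ q ∈ F, ¬ w ≤ q) ∧ v < w ∧ ¬ u ≤ w := by
  classical
  obtain ⟨w, hvw, -, hw⟩ := h.exists_between_incomp {v} ∅ (insert u (F.filter (¬ · ≤ v)))
    (by simp) (by simpa using huv) (by simp)
  have hvw : v < w := hvw v (Finset.mem_singleton_self v)
  refine ⟨w, fun q hq hwq => ?_, hvw, (hw u (Finset.mem_insert_self _ _)).2⟩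
  by_cases hqv : q ≤ v
  · exact hvw.not_ge (hwq.trans hqv)
  · exact (hw q (Finset.mem_insert_of_mem (Finset.mem_filter.2 ⟨hq, hqv⟩))).1 hwq

theorem exists_top (F : Finset P) (x y : P) :
    ∃ w, (∀ q ∈ F, ¬ w ≤ q) ∧ (x ≠ y → ¬ (x < w ↔ y < w)) := by
  by_cases hxy : x = y
  · obtain ⟨w, hw⟩ := h.exists_incomp F
    exact ⟨w, fun q hq => (hw q hq).1, fun hne => absurd hxy hne⟩
  by_cases hle : x ≤ y
  · obtain ⟨w, hF, hxw, hyw⟩ :=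
      h.exists_gt_not_le_of_not_le F fun hyx => hxy (le_antisymm hle hyx)
    exact ⟨w, hF, fun _ hiff => hyw (hiff.1 hxw).le⟩
  · obtain ⟨w, hF, hyw, hxw⟩ := h.exists_gt_not_le_of_not_le F hle
    exact ⟨w, hF, fun _ hiff => hxw (hiff.2 hyw).le⟩

theorem exists_chain (F : Finset P) (x y : P) (n : ℕ) :
    ∃ c : ℕ → P, StrictMonoOn c (Set.Iic n) ∧ (∀ i < n, ∀ q ∈ F, ¬ c i ≤ q ∧ ¬ q ≤ c i) ∧
      (∀ q ∈ F, ¬ c n ≤ q) ∧ (x ≠ y → ¬ (x < c n ↔ y < c n)) := by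
  obtain ⟨w, hwF, hsep⟩ := h.exists_top F x y
  obtain ⟨c, rfl, hmono, hinc⟩ := h.exists_chain_below hwF n
  exact ⟨c, hmono, hinc, hwF, hsep⟩

end ExtensionProperty

def lowerIn (B : Set P) (q : P) : Set P := {p ∈ B | p < q}

def coneIn (B : Set P) (b : P) : Set P := {q ∈ B | b ≤ q ∧ ∀ p ∈ B, p < q → b ≤ p}

namespace OrderIso

variable {B : Set P} {g : P ≃o P}

theorem symm_mem_iff (hB : ∀ p, g p ∈ B ↔ p ∈ B) (p : P) : g.symm p ∈ B ↔ p ∈ B := by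
  rw [← hB, apply_symm_apply]

theorem image_lowerIn (hB : ∀ p, g p ∈ B ↔ p ∈ B) (q : P) :
    g '' lowerIn B q = lowerIn B (g q) := by
  ext p
  refine ⟨?_, fun ⟨hp, hpq⟩ => ⟨g.symm p, ⟨(symm_mem_iff hB p).2 hp, ?_⟩, g.apply_symm_apply p⟩⟩
  · rintro ⟨p, ⟨hp, hpq⟩, rfl⟩
    exact ⟨(hB p).2 hp, g.lt_iff_lt.2 hpq⟩
  · rwa [← g.lt_iff_lt, apply_symm_apply]

theorem mapsTo_coneIn (hB : ∀ p, g p ∈ B ↔ p ∈ B) (b : P) :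
    Set.MapsTo g (coneIn B b) (coneIn B (g b)) := by
  rintro q ⟨hq, hbq, hcone⟩
  refine ⟨(hB q).2 hq, g.le_iff_le.2 hbq, fun p hp hpq => ?_⟩
  rw [← g.apply_symm_apply p, g.le_iff_le]
  exact hcone _ ((symm_mem_iff hB p).2 hp) (by rwa [← g.lt_iff_lt, apply_symm_apply])

theorem image_coneIn (hB : ∀ p, g p ∈ B ↔ p ∈ B) (b : P) :
    g '' coneIn B b = coneIn B (g b) := by
  refine (mapsTo_coneIn hB b).image_subset.antisymm
    fun q hq => ⟨g.symm q, ?_, g.apply_symm_apply q⟩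
  simpa using mapsTo_coneIn (symm_mem_iff hB) (g b) hq

end OrderIso

-- consecutive values differ by `2`, so the cone sizes in `ncard_coneIn_t_zero` determine `m`
def topIndex (m : ℕ) : ℕ := 2 * m + 1

structure ChainSystem (P : Type*) [PartialOrder P] where
  t : ℕ → ℕ → P
  strictMonoOn : ∀ m, StrictMonoOn (t m) (Set.Iic (topIndex m))
  lt_cross : ∀ {m m' i j}, m ≠ m' → i ≤ topIndex m → j ≤ topIndex m' → t m i < t m' j →
    j = topIndex m' ∧ m < m'
  ne_cross : ∀ {m m' i j}, m ≠ m' → i ≤ topIndex m → j ≤ topIndex m' → t m i ≠ t m' j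

namespace ChainSystem

variable (S : ChainSystem P)

def points : Set P := {p | ∃ m, ∃ i ≤ topIndex m, S.t m i = p}

variable {S}

theorem t_mem_points {m i : ℕ} (hi : i ≤ topIndex m) : S.t m i ∈ S.points := ⟨m, i, hi, rfl⟩

theorem t_lt_t {m i j : ℕ} (hij : i < j) (hj : j ≤ topIndex m) : S.t m i < S.t m j :=
  S.strictMonoOn m (hij.le.trans hj : i ≤ topIndex m) hj hij

theorem t_le_t {m i j : ℕ} (hij : i ≤ j) (hj : j ≤ topIndex m) : S.t m i ≤ S.t m j :=
  (S.strictMonoOn m).monotoneOn (hij.trans hj : i ≤ topIndex m) hj hij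

theorem t_lt_t_iff {m i j : ℕ} (hi : i ≤ topIndex m) (hj : j ≤ topIndex m) :
    S.t m i < S.t m j ↔ i < j :=
  (S.strictMonoOn m).lt_iff_lt hi hj

theorem lowerIn_t_zero (m : ℕ) : lowerIn S.points (S.t m 0) = ∅ := by
  refine Set.eq_empty_of_forall_notMem ?_
  rintro _ ⟨⟨m', j, hj, rfl⟩, hlt⟩
  by_cases hm : m' = m
  · subst hm
    exact Nat.not_lt_zero j ((t_lt_t_iff hj (Nat.zero_le _)).1 hlt)
  · exact absurd (S.lt_cross hm hj (Nat.zero_le _) hlt).1 (by simp [topIndex])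

theorem exists_eq_t_zero {q : P} (hq : q ∈ S.points) (hlow : lowerIn S.points q = ∅) :
    ∃ m, q = S.t m 0 := by
  obtain ⟨m, i, hi, rfl⟩ := hq
  rcases Nat.eq_zero_or_pos i with rfl | hi0
  · exact ⟨m, rfl⟩
  · exact absurd hlow
      (Set.nonempty_iff_ne_empty.1 ⟨_, t_mem_points (Nat.zero_le _), t_lt_t hi0 hi⟩)

theorem mem_lowerIn_t {m i : ℕ} (hi : i ≤ topIndex m) {p : P}
    (hp : p ∈ lowerIn S.points (S.t m i)) :
    (∃ j < i, p = S.t m j) ∨ ∃ m' < m, ∃ j ≤ topIndex m', p = S.t m' j := by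
  obtain ⟨⟨m', j, hj, rfl⟩, hlt⟩ := hp
  by_cases hm : m' = m
  · subst hm
    exact .inl ⟨j, (t_lt_t_iff hj hi).1 hlt, rfl⟩
  · exact .inr ⟨m', (S.lt_cross hm hj hi hlt).2, j, hj, rfl⟩

theorem eq_of_lowerIn_eq {q q' : P} (hq : q ∈ S.points) (hq' : q' ∈ S.points)
    (hlow : lowerIn S.points q = lowerIn S.points q') (hne : (lowerIn S.points q).Nonempty) :
    q = q' := by
  obtain ⟨m, i, hi, rfl⟩ := hq
  obtain ⟨m', j, hj, rfl⟩ := hq'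
  have hi0 : 0 < i := Nat.pos_of_ne_zero <| by
    rintro rfl
    exact hne.ne_empty (lowerIn_t_zero m)
  have hj0 : 0 < j := Nat.pos_of_ne_zero <| by
    rintro rfl
    exact hne.ne_empty (hlow.trans (lowerIn_t_zero m'))
  have hm : m = m' := by
    by_contra hm
    have h1 : S.t m 0 ∈ lowerIn S.points (S.t m' j) :=
      hlow ▸ ⟨t_mem_points (Nat.zero_le _), t_lt_t hi0 hi⟩
    have h2 : S.t m' 0 ∈ lowerIn S.points (S.t m i) :=
      hlow ▸ ⟨t_mem_points (Nat.zero_le _), t_lt_t hj0 hj⟩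
    exact lt_asymm (S.lt_cross hm (Nat.zero_le _) hj h1.2).2
      (S.lt_cross (Ne.symm hm) (Nat.zero_le _) hi h2.2).2
  subst hm
  rcases lt_trichotomy i j with hij | rfl | hji
  · have : S.t m i ∈ lowerIn S.points (S.t m i) := hlow ▸ ⟨t_mem_points hi, t_lt_t hij hj⟩
    exact absurd this.2 (lt_irrefl _)
  · rfl
  · have : S.t m j ∈ lowerIn S.points (S.t m j) := hlow.symm ▸ ⟨t_mem_points hj, t_lt_t hji hi⟩
    exact absurd this.2 (lt_irrefl _)

theorem ncard_coneIn_t_zero (m : ℕ) :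
    topIndex m ≤ (coneIn S.points (S.t m 0)).ncard ∧
      (coneIn S.points (S.t m 0)).ncard ≤ topIndex m + 1 := by
  have hsub : coneIn S.points (S.t m 0) ⊆ S.t m '' Set.Iic (topIndex m) := by
    rintro _ ⟨⟨m', j, hj, rfl⟩, hle, hcone⟩
    by_cases hm : m = m'
    · subst hm
      exact ⟨j, hj, rfl⟩
    have hlt := lt_of_le_of_ne hle (S.ne_cross hm (Nat.zero_le _) hj)
    obtain ⟨rfl, -⟩ := S.lt_cross hm (Nat.zero_le _) hj hlt
    have := hcone _ (t_mem_points (Nat.zero_le _)) (t_lt_t (by simp [topIndex]) le_rfl)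
    have hlt0 := lt_of_le_of_ne this (S.ne_cross hm (Nat.zero_le _) (Nat.zero_le _))
    exact absurd (S.lt_cross hm (Nat.zero_le _) (Nat.zero_le _) hlt0).1 (by simp [topIndex])
  have hsup : S.t m '' Set.Iio (topIndex m) ⊆ coneIn S.points (S.t m 0) := by
    rintro _ ⟨i, hi, rfl⟩
    refine ⟨t_mem_points hi.le, t_le_t (Nat.zero_le _) hi.le, ?_⟩
    intro p hp hpi
    rcases mem_lowerIn_t (hi.le : i ≤ topIndex m) ⟨hp, hpi⟩ with
      ⟨j, hji, rfl⟩ | ⟨m', hm', j, hj, rfl⟩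
    · exact t_le_t (Nat.zero_le _) (hji.le.trans hi.le)
    · exact absurd (S.lt_cross hm'.ne hj hi.le hpi).1 (ne_of_lt hi)
  have hfin : (S.t m '' Set.Iic (topIndex m)).Finite := (Set.finite_Iic _).image _
  have hinj := (S.strictMonoOn m).injOn
  constructor
  · calc topIndex m = (S.t m '' Set.Iio (topIndex m)).ncard := by
          rw [(hinj.mono Set.Iio_subset_Iic_self).ncard_image, Set.ncard_Iio_nat]
      _ ≤ _ := Set.ncard_le_ncard hsup (hfin.subset hsub)
  · calc _ ≤ (S.t m '' Set.Iic (topIndex m)).ncard := Set.ncard_le_ncard hsub hfin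
      _ = topIndex m + 1 := by rw [hinj.ncard_image, Set.ncard_Iic_nat]

theorem orderIso_apply_t_zero {g : P ≃o P} (hg : ∀ p, g p ∈ S.points ↔ p ∈ S.points) (m : ℕ) :
    g (S.t m 0) = S.t m 0 := by
  obtain ⟨m', hm'⟩ := exists_eq_t_zero ((hg _).2 (t_mem_points (m := m) (Nat.zero_le _)))
    (by rw [← g.image_lowerIn hg, lowerIn_t_zero, Set.image_empty])
  have hcard : (coneIn S.points (S.t m' 0)).ncard = (coneIn S.points (S.t m 0)).ncard := by
    rw [← hm', ← g.image_coneIn hg, Set.ncard_image_of_injective _ g.injective]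
  have := S.ncard_coneIn_t_zero m
  have := S.ncard_coneIn_t_zero m'
  obtain rfl : m' = m := by simp only [topIndex] at *; omega
  exact hm'

theorem orderIso_apply_t {g : P ≃o P} (hg : ∀ p, g p ∈ S.points ↔ p ∈ S.points) {m i : ℕ}
    (hi : i ≤ topIndex m) : g (S.t m i) = S.t m i := by
  induction m using Nat.strong_induction_on generalizing i with
  | _ m ihm =>
  induction i using Nat.strong_induction_on with
  | _ i ihi =>
  rcases Nat.eq_zero_or_pos i with rfl | hi0
  · exact orderIso_apply_t_zero hg m
  have hfix : g '' lowerIn S.points (S.t m i) = lowerIn S.points (S.t m i) := by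
    refine Set.EqOn.image_eq_self fun p hp => ?_
    rcases mem_lowerIn_t hi hp with ⟨j, hji, rfl⟩ | ⟨m', hm', j, hj, rfl⟩
    exacts [ihi j hji (hji.le.trans hi), ihm m' hm' hj]
  refine eq_of_lowerIn_eq ((hg _).2 (t_mem_points hi)) (t_mem_points hi)
    (by rw [← g.image_lowerIn hg, hfix]) ?_
  rw [← g.image_lowerIn hg, hfix]
  exact ⟨_, t_mem_points (Nat.zero_le _), t_lt_t hi0 hi⟩

end ChainSystem

namespace ExtensionProperty

variable (h : ExtensionProperty P) (e : ℕ → P × P)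

open scoped Classical in
noncomputable def chainPoints : ℕ → Finset P
  | 0 => ∅
  | n + 1 => chainPoints n ∪ (Finset.range (topIndex n + 1)).image
      (Classical.choose (h.exists_chain (chainPoints n) (e n).1 (e n).2 (topIndex n)))

noncomputable def chain (n : ℕ) : ℕ → P :=
  Classical.choose (h.exists_chain (h.chainPoints e n) (e n).1 (e n).2 (topIndex n))

theorem chain_spec (n : ℕ) :
    StrictMonoOn (h.chain e n) (Set.Iic (topIndex n)) ∧
      (∀ i < topIndex n, ∀ q ∈ h.chainPoints e n, ¬ h.chain e n i ≤ q ∧ ¬ q ≤ h.chain e n i) ∧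
      (∀ q ∈ h.chainPoints e n, ¬ h.chain e n (topIndex n) ≤ q) ∧
      ((e n).1 ≠ (e n).2 →
        ¬ ((e n).1 < h.chain e n (topIndex n) ↔ (e n).2 < h.chain e n (topIndex n))) :=
  Classical.choose_spec (h.exists_chain (h.chainPoints e n) (e n).1 (e n).2 (topIndex n))

theorem chain_mem_chainPoints {m n i : ℕ} (hmn : m < n) (hi : i ≤ topIndex m) :
    h.chain e m i ∈ h.chainPoints e n := by
  classical
  induction n with
  | zero => exact absurd hmn (Nat.not_lt_zero m)
  | succ n ih =>
    rw [chainPoints, Finset.mem_union]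
    rcases (Nat.lt_succ_iff.1 hmn).lt_or_eq with hmn | rfl
    · exact .inl (ih hmn)
    · exact .inr (Finset.mem_image_of_mem _ (Finset.mem_range.2 (Nat.lt_succ_of_le hi)))

theorem chain_cross {m m' i j : ℕ} (hmm : m < m') (hi : i ≤ topIndex m) (hj : j ≤ topIndex m') :
    ¬ h.chain e m' j ≤ h.chain e m i ∧ (j < topIndex m' → ¬ h.chain e m i ≤ h.chain e m' j) := by
  obtain ⟨-, hinc, htop, -⟩ := h.chain_spec e m'
  have hq := h.chain_mem_chainPoints e hmm hi
  rcases hj.lt_or_eq with hj | rfl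
  · exact ⟨(hinc j hj _ hq).1, fun _ => (hinc j hj _ hq).2⟩
  · exact ⟨htop _ hq, fun hlt => absurd hlt (lt_irrefl _)⟩

noncomputable def chainSystem : ChainSystem P where
  t := h.chain e
  strictMonoOn m := (h.chain_spec e m).1
  lt_cross {_ _ _ j} hne hi hj hlt := by
    rcases hne.lt_or_gt with hmm | hmm
    · refine ⟨by_contra fun hj' => (h.chain_cross e hmm hi hj).2 (lt_of_le_of_ne hj hj') hlt.le,
        hmm⟩
    · exact absurd hlt.le (h.chain_cross e hmm hj hi).1
  ne_cross hne hi hj heq := by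
    rcases hne.lt_or_gt with hmm | hmm
    · exact (h.chain_cross e hmm hi hj).1 heq.ge
    · exact (h.chain_cross e hmm hj hi).1 heq.le

theorem chainSystem_separates {m : ℕ} (hne : (e m).1 ≠ (e m).2) :
    ¬ ((e m).1 < (h.chainSystem e).t m (topIndex m) ↔
      (e m).2 < (h.chainSystem e).t m (topIndex m)) :=
  (h.chain_spec e m).2.2.2 hne

end ExtensionProperty

end

theorem universal_partial_order_distinguishing_number_two_general
    (P : Type*) [Countable P] [PartialOrder P]
    (hext : ∀ A B C : Finset P, Disjoint A B → Disjoint A C → Disjoint B C →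
      (∀ a ∈ A, ∀ b ∈ B, a < b) →
      (∀ a ∈ A, ∀ c ∈ C, ¬ c ≤ a) →
      (∀ b ∈ B, ∀ c ∈ C, ¬ b ≤ c) →
      ∃ x, x ∉ A ∧ x ∉ B ∧ x ∉ C ∧ (∀ a ∈ A, a < x) ∧ (∀ b ∈ B, x < b) ∧
        ∀ c ∈ C, x ≠ c ∧ ¬ x ≤ c ∧ ¬ c ≤ x) :
    (∃ c : P → Bool, ∀ g : P ≃o P, (∀ v, c (g v) = c v) → ∀ v, g v = v) ∧
    (∃ g : P ≃o P, ∃ v, g v ≠ v) := by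
  have h : ExtensionProperty P := hext
  refine ⟨?_, h.exists_orderIso_ne⟩
  have := h.nonempty
  obtain ⟨e, he⟩ := exists_surjective_nat (P × P)
  let S := h.chainSystem e
  classical
  refine ⟨fun p => decide (p ∈ S.points), fun g hg v => by_contra fun hne => ?_⟩
  have hS (p : P) : g p ∈ S.points ↔ p ∈ S.points := by simpa using hg p
  obtain ⟨m, hm⟩ := he (v, g v)
  refine h.chainSystem_separates e (m := m) (by rw [hm]; exact Ne.symm hne) ?_
  rw [hm]
  calc v < S.t m (topIndex m) ↔ g v < g (S.t m (topIndex m)) := g.lt_iff_lt.symm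
    _ ↔ _ := by rw [S.orderIso_apply_t hS le_rfl]

/-- The universal homogeneous partial order `ℙ` has
distinguishing number 2. -/
theorem universal_partial_order_distinguishing_number_two
    (P : Type*) [Countable P] [Infinite P] [PartialOrder P]
    (hext : ∀ A B C : Finset P, Disjoint A B → Disjoint A C → Disjoint B C →
      (∀ a ∈ A, ∀ b ∈ B, a < b) →
      (∀ a ∈ A, ∀ c ∈ C, ¬ c ≤ a) →
      (∀ b ∈ B, ∀ c ∈ C, ¬ b ≤ c) →
      ∃ x, x ∉ A ∧ x ∉ B ∧ x ∉ C ∧ (∀ a ∈ A, a < x) ∧ (∀ b ∈ B, x < b) ∧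
        ∀ c ∈ C, x ≠ c ∧ ¬ x ≤ c ∧ ¬ c ≤ x) :
    (∃ c : P → Bool, ∀ g : P ≃o P, (∀ v, c (g v) = c v) → ∀ v, g v = v) ∧
    (∃ g : P ≃o P, ∃ v, g v ≠ v) :=
  universal_partial_order_distinguishing_number_two_general P hext
end

section
/- Fix a finite n ≥ 2. Let V be a countably infinite set, s : V → Fin n a surjection (whose fibers are the ⊥-classes), and → a binary relation on V such that: x → y implies s(x) ≠ s(y); for all x, y with s(x) ≠ s(y) exactly one of x → y, y → x holds; and for every i ∈ Fin n and all disjoint finite sets A, B ⊆ {v ∈ V : s(v) ≠ i} there exists x with s(x) = i, x → a for all a ∈ A, and b → x for all b ∈ B. (This directed graph is the generic structure n ∗ I_∞ in which the non-adjacency relation ⊥ is an equivalence with n classes.) Then its distinguishing number is 2: there exists a coloring c : V → Bool such that the only automorphism g with c ∘ g = c is the identity, while a nontrivial automorphism exists. -/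
/-!
A nontrivial automorphism comes from back-and-forth: finite class-preserving partial isomorphisms
extend by one point at a time thanks to the extension property, starting from a map sending some
vertex to a different vertex of its class.

For the distinguishing colouring, build greedily a sequence `f 0, f 1, …` alternating between two
classes, in which every vertex points to all later vertices of the other class, and such that any
two distinct vertices outside the sequence are told apart by some `f k` pointing to the first but
not to the second. Colour the range of `f`. A colour-preserving automorphism permutes the range by
a strictly increasing bijection of `ℕ`, hence fixes the range pointwise, and then fixes every other
vertex as well since the `f k` separate them.
-/

open Finset Function

section

variable {V : Type*}

section BackAndForth

variable (R : V → V → Prop)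

def IsPartialIso (Γ : Set (V × V)) : Prop :=
  ∀ p ∈ Γ, ∀ q ∈ Γ, (p.1 = q.1 ↔ p.2 = q.2) ∧ (R p.1 q.1 ↔ R p.2 q.2)

variable {R}

lemma IsPartialIso.image_swap {Γ : Set (V × V)} (h : IsPartialIso R Γ) :
    IsPartialIso R (Prod.swap '' Γ) := by
  rintro _ ⟨p, hp, rfl⟩ _ ⟨q, hq, rfl⟩
  exact (h p hp q hq).imp Iff.symm Iff.symm

lemma IsPartialIso.insert {Γ : Set (V × V)} {x y : V} (h : IsPartialIso R Γ)
    (hxx : R x x ↔ R y y)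
    (hΓ : ∀ q ∈ Γ, (x = q.1 ↔ y = q.2) ∧ (R x q.1 ↔ R y q.2) ∧ (R q.1 x ↔ R q.2 y)) :
    IsPartialIso R (insert (x, y) Γ) := by
  rintro p (rfl | hp) q (rfl | hq)
  · exact ⟨iff_of_true rfl rfl, hxx⟩
  · exact ⟨(hΓ q hq).1, (hΓ q hq).2.1⟩
  · exact ⟨eq_comm.trans ((hΓ p hp).1.trans eq_comm), (hΓ p hp).2.2⟩
  · exact h p hp q hq

lemma IsPartialIso.iUnion {Γ : ℕ → Set (V × V)} (hmono : Monotone Γ)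
    (h : ∀ k, IsPartialIso R (Γ k)) : IsPartialIso R (⋃ k, Γ k) := by
  intro p hp q hq
  obtain ⟨j, hj⟩ := Set.mem_iUnion.mp hp
  obtain ⟨k, hk⟩ := Set.mem_iUnion.mp hq
  exact h (max j k) p (hmono (le_max_left j k) hj) q (hmono (le_max_right j k) hk)

lemma IsPartialIso.exists_equiv {Γ : Set (V × V)} (h : IsPartialIso R Γ)
    (hdom : ∀ x, ∃ y, (x, y) ∈ Γ) (hcod : ∀ y, ∃ x, (x, y) ∈ Γ) :
    ∃ g : V ≃ V, (∀ x y, R x y ↔ R (g x) (g y)) ∧ ∀ p ∈ Γ, g p.1 = p.2 := by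
  choose f hf using hdom
  have hgraph : ∀ p ∈ Γ, f p.1 = p.2 := fun p hp => (h _ (hf p.1) p hp).1.mp rfl
  have hbij : Bijective f := by
    refine ⟨fun x y hxy => (h _ (hf x) _ (hf y)).1.mpr hxy, fun y => ?_⟩
    obtain ⟨x, hx⟩ := hcod y
    exact ⟨x, hgraph _ hx⟩
  exact ⟨Equiv.ofBijective f hbij, fun x y => (h _ (hf x) _ (hf y)).2, hgraph⟩

theorem exists_equiv_of_forth [Countable V] [Nonempty V] [DecidableEq V]
    (𝓕 : Finset (V × V) → Prop) (hiso : ∀ P, 𝓕 P → IsPartialIso R P)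
    (hswap : ∀ P, 𝓕 P → 𝓕 (P.image Prod.swap))
    (hforth : ∀ P, 𝓕 P → ∀ x, ∃ Q, 𝓕 Q ∧ P ⊆ Q ∧ ∃ y, (x, y) ∈ Q)
    {P₀ : Finset (V × V)} (h₀ : 𝓕 P₀) :
    ∃ g : V ≃ V, (∀ x y, R x y ↔ R (g x) (g y)) ∧ ∀ p ∈ P₀, g p.1 = p.2 := by
  have hback : ∀ P, 𝓕 P → ∀ y, ∃ Q, 𝓕 Q ∧ P ⊆ Q ∧ ∃ x, (x, y) ∈ Q := by
    intro P hP y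
    obtain ⟨Q, hQ, hPQ, x, hx⟩ := hforth _ (hswap P hP) y
    refine ⟨Q.image Prod.swap, hswap Q hQ, fun p hp => ?_, x, mem_image_of_mem Prod.swap hx⟩
    exact mem_image.mpr ⟨p.swap, hPQ (mem_image_of_mem _ hp), p.swap_swap⟩
  choose F hF hPF hxF using hforth
  choose B hB hPB hyB using hback
  obtain ⟨e, he⟩ := exists_surjective_nat V
  let step : {P // 𝓕 P} → ℕ → {P // 𝓕 P} := fun P k =>
    ⟨B (F P.1 P.2 (e k)) (hF _ _ _) (e k), hB _ _ _⟩
  let seq : ℕ → {P // 𝓕 P} := fun k => Nat.rec ⟨P₀, h₀⟩ (fun k P => step P k) k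
  have hmono : Monotone fun k => ((seq k).1 : Set (V × V)) :=
    monotone_nat_of_le_succ fun k => coe_subset.mpr ((hPF _ _ _).trans (hPB _ _ _))
  have hdom : ∀ x, ∃ y, (x, y) ∈ ⋃ k, ((seq k).1 : Set (V × V)) := by
    intro x
    obtain ⟨k, rfl⟩ := he x
    obtain ⟨y, hy⟩ := hxF _ (seq k).2 (e k)
    exact ⟨y, Set.mem_iUnion.mpr ⟨k + 1, hPB _ _ _ hy⟩⟩
  have hcod : ∀ y, ∃ x, (x, y) ∈ ⋃ k, ((seq k).1 : Set (V × V)) := by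
    intro y
    obtain ⟨k, rfl⟩ := he y
    obtain ⟨x, hx⟩ := hyB _ (hF _ (seq k).2 (e k)) (e k)
    exact ⟨x, Set.mem_iUnion.mpr ⟨k + 1, hx⟩⟩
  obtain ⟨g, hgR, hg⟩ :=
    (IsPartialIso.iUnion hmono fun k => hiso _ (seq k).2).exists_equiv hdom hcod
  exact ⟨g, hgR, fun p hp => hg p (Set.mem_iUnion.mpr ⟨0, hp⟩)⟩

end BackAndForth

theorem exists_seq_forall_image_range {α : Type*} [DecidableEq α]
    (P : ℕ → Finset α → α → Prop) (h : ∀ k S, ∃ x, P k S x) :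
    ∃ f : ℕ → α, ∀ k, P k ((range k).image f) (f k) := by
  choose next hnext using h
  let pre : ℕ → List α := fun k => Nat.rec [] (fun k l => l ++ [next k l.toFinset]) k
  have hpre : ∀ k, pre k = (List.range k).map fun j => next j (pre j).toFinset := by
    intro k
    induction k with
    | zero => rfl
    | succ k ih => rw [List.range_succ, List.map_append, ← ih]; rfl
  refine ⟨fun k => next k (pre k).toFinset, fun k => ?_⟩
  convert hnext k (pre k).toFinset using 1
  ext x
  simp [hpre k]

section ForwardChain

variable {R : V → V → Prop} {f : ℕ → V}

lemma injective_of_forward_chain (hfwd : ∀ j k, R (f j) (f k) → j < k)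
    (hsucc : ∀ k, R (f k) (f (k + 1))) : Injective f := by
  intro j k hjk
  by_contra hne
  wlog hlt : j < k generalizing j k
  · exact this hjk.symm (Ne.symm hne) (by omega)
  obtain ⟨m, rfl⟩ : ∃ m, k = m + 1 := ⟨k - 1, by omega⟩
  have := hfwd m j (hjk ▸ hsucc m)
  omega

lemma apply_eq_of_forward_chain (hfwd : ∀ j k, R (f j) (f k) → j < k)
    (hsucc : ∀ k, R (f k) (f (k + 1))) {g : V ≃ V} (hg : ∀ x y, R x y ↔ R (g x) (g y))
    (hrange : ∀ v, g v ∈ Set.range f ↔ v ∈ Set.range f) (k : ℕ) : g (f k) = f k := by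
  choose σ hσ using fun k => (hrange (f k)).mpr ⟨k, rfl⟩
  have hmono : StrictMono σ := strictMono_nat_of_lt_succ fun k =>
    hfwd _ _ (by rw [hσ, hσ]; exact (hg _ _).mp (hsucc k))
  have hsurj : Surjective σ := by
    intro m
    obtain ⟨k, hk⟩ := (hrange (g.symm (f m))).mp (by rw [g.apply_symm_apply]; exact ⟨m, rfl⟩)
    exact ⟨k, injective_of_forward_chain hfwd hsucc (by rw [hσ, hk, g.apply_symm_apply])⟩
  have hid : StrictMono.orderIsoOfSurjective σ hmono hsurj = OrderIso.refl ℕ :=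
    Subsingleton.elim _ _
  rw [← hσ, show σ k = k from DFunLike.congr_fun hid k]

lemma exists_distinguishing_of_forward_chain (hfwd : ∀ j k, R (f j) (f k) → j < k)
    (hsucc : ∀ k, R (f k) (f (k + 1)))
    (hsep : ∀ u v, u ∉ Set.range f → v ∉ Set.range f → u ≠ v → ∃ k, R (f k) u ∧ ¬ R (f k) v) :
    ∃ c : V → Bool, ∀ g : V ≃ V, (∀ x y, R x y ↔ R (g x) (g y)) →
      (∀ v, c (g v) = c v) → ∀ v, g v = v := by
  classical
  refine ⟨fun v => decide (v ∈ Set.range f), fun g hg hc v => ?_⟩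
  have hrange : ∀ v, g v ∈ Set.range f ↔ v ∈ Set.range f := fun v => by simpa using hc v
  have hfix := apply_eq_of_forward_chain hfwd hsucc hg hrange
  by_cases hv : v ∈ Set.range f
  · obtain ⟨k, rfl⟩ := hv
    exact hfix k
  by_contra hne
  obtain ⟨k, hkv, hkgv⟩ := hsep v (g v) hv (mt (hrange v).mp hv) (fun h => hne h.symm)
  exact hkgv (hfix k ▸ (hg _ _).mp hkv)

end ForwardChain

structure IsGenericPartiteTournament {ι : Type*} (s : V → ι) (R : V → V → Prop) : Prop where
  ne_of_rel : ∀ x y, R x y → s x ≠ s y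
  rel_iff_not_rel : ∀ x y, s x ≠ s y → (R x y ↔ ¬ R y x)
  exists_extension : ∀ i, ∀ A B : Finset V, Disjoint A B → (∀ a ∈ A, s a ≠ i) →
    (∀ b ∈ B, s b ≠ i) → ∃ x, s x = i ∧ (∀ a ∈ A, R x a) ∧ (∀ b ∈ B, R b x)

def IsClassPreservingPartialIso {ι : Type*} (s : V → ι) (R : V → V → Prop)
    (P : Finset (V × V)) : Prop :=
  IsPartialIso R P ∧ ∀ p ∈ P, s p.1 = s p.2

namespace IsGenericPartiteTournament

variable {ι : Type*} {s : V → ι} {R : V → V → Prop}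

lemma irrefl (G : IsGenericPartiteTournament s R) (x : V) : ¬ R x x :=
  fun h => G.ne_of_rel x x h rfl

lemma asymm (G : IsGenericPartiteTournament s R) {x y : V} (h : R x y) : ¬ R y x :=
  (G.rel_iff_not_rel x y (G.ne_of_rel x y h)).mp h

lemma rel_or_rel (G : IsGenericPartiteTournament s R) {x y : V} (h : s x ≠ s y) :
    R x y ∨ R y x :=
  or_iff_not_imp_left.mpr fun hxy => by_contra fun hyx => hxy ((G.rel_iff_not_rel x y h).mpr hyx)

lemma rel_iff_rel_of_imp (G : IsGenericPartiteTournament s R) {x y x' y' : V}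
    (hx : s x = s x') (hy : s y = s y') (h : R x y → R x' y') (h' : R y x → R y' x') :
    R x y ↔ R x' y' := by
  refine ⟨h, fun hr => ?_⟩
  have hne : s x ≠ s y := hx ▸ hy ▸ G.ne_of_rel _ _ hr
  exact (G.rel_or_rel hne).resolve_right fun hyx => G.asymm hr (h' hyx)

lemma nonempty [Nonempty ι] (G : IsGenericPartiteTournament s R) : Nonempty V :=
  let ⟨x, _⟩ := G.exists_extension (Classical.arbitrary ι) ∅ ∅ (disjoint_empty_left _)
    (by simp) (by simp)
  ⟨x⟩

/- To escape a finite set `F`, the new vertex of class `i` points to an auxiliary vertex `y` of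
another class that points to every vertex of `F` in class `i`. -/
lemma exists_forall_rel_notMem [Nontrivial ι] (G : IsGenericPartiteTournament s R) {i : ι}
    {A : Finset V} (hA : ∀ a ∈ A, s a ≠ i) (F : Finset V) :
    ∃ x, s x = i ∧ (∀ a ∈ A, R x a) ∧ x ∉ F := by
  classical
  obtain ⟨j, hji⟩ := exists_ne i
  obtain ⟨y, hy, hyF, -⟩ := G.exists_extension j (F.filter (s · = i)) ∅ (disjoint_empty_right _)
    (fun a ha => (mem_filter.mp ha).2 ▸ hji.symm) (by simp)
  obtain ⟨x, hx, hxA, -⟩ := G.exists_extension i (insert y A) ∅ (disjoint_empty_right _)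
    (forall_mem_insert _ _ _ |>.mpr ⟨hy ▸ hji, hA⟩) (by simp)
  exact ⟨x, hx, fun a ha => hxA a (mem_insert_of_mem ha),
    fun hxF => G.asymm (hxA y (mem_insert_self _ _)) (hyF x (mem_filter.mpr ⟨hxF, hx⟩))⟩

lemma exists_extension_notMem [Nontrivial ι] (G : IsGenericPartiteTournament s R) {i : ι}
    {A B : Finset V} (hAB : Disjoint A B) (hA : ∀ a ∈ A, s a ≠ i) (hB : ∀ b ∈ B, s b ≠ i)
    (F : Finset V) : ∃ x, s x = i ∧ (∀ a ∈ A, R x a) ∧ (∀ b ∈ B, R b x) ∧ x ∉ F := by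
  classical
  obtain ⟨j, hji⟩ := exists_ne i
  obtain ⟨y, hy, hyF, hyB⟩ := G.exists_forall_rel_notMem (i := j) (A := F.filter (s · = i))
    (fun a ha => (mem_filter.mp ha).2 ▸ hji.symm) B
  obtain ⟨x, hx, hxA, hxB⟩ := G.exists_extension i (insert y A) B
    (disjoint_insert_left.mpr ⟨hyB, hAB⟩) (forall_mem_insert _ _ _ |>.mpr ⟨hy ▸ hji, hA⟩) hB
  exact ⟨x, hx, fun a ha => hxA a (mem_insert_of_mem ha), hxB,
    fun hxF => G.asymm (hxA y (mem_insert_self _ _)) (hyF x (mem_filter.mpr ⟨hxF, hx⟩))⟩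

lemma exists_chain_step (G : IsGenericPartiteTournament s R) (i : ι)
    (S : Finset V) (u v : V) : ∃ x, s x = i ∧ (∀ p ∈ S, s p ≠ i → R p x) ∧
      (u ∉ S → u ≠ v → s u ≠ i → R x u ∧ ¬ R x v) := by
  classical
  obtain ⟨x, hx, hxu, hxB⟩ := G.exists_extension i
    (({u} : Finset V).filter fun u => u ∉ S ∧ u ≠ v ∧ s u ≠ i)
    ((insert v S).filter (s · ≠ i))
    (by
      simp only [disjoint_left, mem_filter, mem_singleton, mem_insert]
      rintro _ ⟨rfl, huS, huv, -⟩ ⟨hvS | huS', -⟩ <;> contradiction)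
    (fun a ha => (mem_filter.mp ha).2.2.2) (fun b hb => (mem_filter.mp hb).2)
  refine ⟨x, hx, fun p hp hpi => hxB p (mem_filter.mpr ⟨mem_insert_of_mem hp, hpi⟩),
    fun huS huv hui => ⟨hxu u (mem_filter.mpr ⟨mem_singleton_self u, huS, huv, hui⟩),
      fun hxv => ?_⟩⟩
  by_cases hvi : s v = i
  · exact G.ne_of_rel x v hxv (hx.trans hvi.symm)
  · exact G.asymm hxv (hxB v (mem_filter.mpr ⟨mem_insert_self v S, hvi⟩))

lemma exists_forward_chain [Countable V] [Nontrivial ι] (G : IsGenericPartiteTournament s R) :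
    ∃ f : ℕ → V, (∀ j k, R (f j) (f k) → j < k) ∧ (∀ k, R (f k) (f (k + 1))) ∧
      ∀ u v, u ∉ Set.range f → v ∉ Set.range f → u ≠ v → ∃ k, R (f k) u ∧ ¬ R (f k) v := by
  classical
  obtain ⟨a, b, hab⟩ := exists_pair_ne ι
  have := G.nonempty
  obtain ⟨e, he⟩ := exists_surjective_nat (V × V)
  -- step `k` lies in class `c k` and serves the pair `e (k / 2)`: of the steps `2 * m` and
  -- `2 * m + 1`, one lies outside the class of `(e m).1`
  let c : ℕ → ι := fun k => if k % 2 = 0 then a else b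
  obtain ⟨f, hf⟩ := exists_seq_forall_image_range
    (fun k S x => s x = c k ∧ (∀ p ∈ S, s p ≠ c k → R p x) ∧ ((e (k / 2)).1 ∉ S →
      (e (k / 2)).1 ≠ (e (k / 2)).2 → s (e (k / 2)).1 ≠ c k →
        R x (e (k / 2)).1 ∧ ¬ R x (e (k / 2)).2))
    fun k S => G.exists_chain_step (c k) S _ _
  have hlater : ∀ j k, j < k → s (f j) ≠ s (f k) → R (f j) (f k) := fun j k hjk hjk' =>
    (hf k).2.1 _ (mem_image_of_mem f (mem_range.mpr hjk)) ((hf k).1 ▸ hjk')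
  refine ⟨f, fun j k hjk => ?_, fun k => hlater k (k + 1) k.lt_succ_self ?_, fun u v hu _ huv => ?_⟩
  · by_contra hkj
    rcases (not_lt.mp hkj).eq_or_lt with rfl | hkj
    · exact G.irrefl _ hjk
    · exact G.asymm hjk (hlater k j hkj (G.ne_of_rel _ _ hjk).symm)
  · rw [(hf k).1, (hf (k + 1)).1]
    simp only [c]
    split_ifs <;> first | exact hab | exact hab.symm | omega
  · obtain ⟨m, hm⟩ := he (u, v)
    obtain ⟨k, hkm, hk⟩ : ∃ k, k / 2 = m ∧ s u ≠ c k := by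
      by_cases hua : s u = a
      · exact ⟨2 * m + 1, by omega, by simp [c, hua, hab]⟩
      · exact ⟨2 * m, by omega, by simpa [c] using hua⟩
    have hsep := (hf k).2.2
    rw [hkm, hm] at hsep
    refine ⟨k, hsep (fun hu' => hu ?_) huv hk⟩
    obtain ⟨j, -, hj⟩ := mem_image.mp hu'
    exact ⟨j, hj⟩

theorem exists_distinguishing_coloring [Countable V] [Nontrivial ι]
    (G : IsGenericPartiteTournament s R) :
    ∃ c : V → Bool, ∀ g : V ≃ V, (∀ x y, R x y ↔ R (g x) (g y)) →
      (∀ v, c (g v) = c v) → ∀ v, g v = v :=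
  let ⟨_, hfwd, hsucc, hsep⟩ := G.exists_forward_chain
  exists_distinguishing_of_forward_chain hfwd hsucc hsep

lemma isClassPreservingPartialIso_image_swap [DecidableEq V] {P : Finset (V × V)}
    (hP : IsClassPreservingPartialIso s R P) :
    IsClassPreservingPartialIso s R (P.image Prod.swap) := by
  refine ⟨by simpa only [coe_image] using hP.1.image_swap, fun q hq => ?_⟩
  obtain ⟨p, hp, rfl⟩ := mem_image.mp hq
  exact (hP.2 p hp).symm

lemma exists_forth [Nontrivial ι] (G : IsGenericPartiteTournament s R)
    {P : Finset (V × V)} (hP : IsClassPreservingPartialIso s R P) (x : V) :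
    ∃ Q, IsClassPreservingPartialIso s R Q ∧ P ⊆ Q ∧ ∃ y, (x, y) ∈ Q := by
  classical
  by_cases hx : ∃ p ∈ P, p.1 = x
  · obtain ⟨p, hp, rfl⟩ := hx
    exact ⟨P, hP, subset_rfl, p.2, hp⟩
  push Not at hx
  obtain ⟨hiso, hcls⟩ := hP
  let A := (P.filter fun p : V × V => R x p.1).image Prod.snd
  let B := (P.filter fun p : V × V => R p.1 x).image Prod.snd
  have hAB : Disjoint A B := by
    simp only [A, B, disjoint_left, mem_image, mem_filter]
    rintro _ ⟨p, ⟨hp, hxp⟩, rfl⟩ ⟨q, ⟨hq, hqx⟩, hqp⟩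
    exact G.asymm hxp ((hiso q hq p hp).1.mpr hqp ▸ hqx)
  have hA : ∀ a ∈ A, s a ≠ s x := by
    simp only [A, mem_image, mem_filter]
    rintro _ ⟨p, ⟨hp, hxp⟩, rfl⟩
    exact hcls p hp ▸ (G.ne_of_rel _ _ hxp).symm
  have hB : ∀ b ∈ B, s b ≠ s x := by
    simp only [B, mem_image, mem_filter]
    rintro _ ⟨p, ⟨hp, hpx⟩, rfl⟩
    exact hcls p hp ▸ G.ne_of_rel _ _ hpx
  obtain ⟨y, hy, hyA, hyB, hyP⟩ := G.exists_extension_notMem hAB hA hB (P.image Prod.snd)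
  refine ⟨insert (x, y) P, ⟨?_, ?_⟩, subset_insert _ _, y, mem_insert_self _ _⟩
  · rw [coe_insert]
    refine hiso.insert (iff_of_false (G.irrefl x) (G.irrefl y)) fun q hq => ⟨?_, ?_, ?_⟩
    · exact iff_of_false (hx q hq).symm fun hyq => hyP (mem_image.mpr ⟨q, hq, hyq.symm⟩)
    · exact G.rel_iff_rel_of_imp hy.symm (hcls q hq)
        (fun h => hyA _ (mem_image_of_mem _ (mem_filter.mpr ⟨hq, h⟩)))
        (fun h => hyB _ (mem_image_of_mem _ (mem_filter.mpr ⟨hq, h⟩)))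
    · exact G.rel_iff_rel_of_imp (hcls q hq) hy.symm
        (fun h => hyB _ (mem_image_of_mem _ (mem_filter.mpr ⟨hq, h⟩)))
        (fun h => hyA _ (mem_image_of_mem _ (mem_filter.mpr ⟨hq, h⟩)))
  · rintro q hq
    rcases mem_insert.mp hq with rfl | hq
    exacts [hy.symm, hcls q hq]

theorem exists_nontrivial_automorphism [Countable V] [Nontrivial ι]
    (G : IsGenericPartiteTournament s R) :
    ∃ g : V ≃ V, (∀ x y, R x y ↔ R (g x) (g y)) ∧ ∃ v, g v ≠ v := by
  classical
  obtain ⟨x⟩ := G.nonempty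
  have : Nonempty V := ⟨x⟩
  obtain ⟨y, hy, -, hyx⟩ := G.exists_forall_rel_notMem (i := s x) (A := ∅) (by simp) {x}
  have h₀ : IsClassPreservingPartialIso s R {(x, y)} := by
    refine ⟨?_, by simp [hy]⟩
    simp only [coe_singleton]
    rintro _ rfl _ rfl
    exact ⟨iff_of_true rfl rfl, iff_of_false (G.irrefl x) (G.irrefl y)⟩
  obtain ⟨g, hg, hgxy⟩ := exists_equiv_of_forth (IsClassPreservingPartialIso s R) (fun P hP => hP.1)
    (fun P => isClassPreservingPartialIso_image_swap) (fun P => G.exists_forth) h₀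
  have hgx : g x = y := hgxy (x, y) (mem_singleton_self _)
  exact ⟨g, hg, x, fun h => hyx (mem_singleton.mpr (hgx.symm.trans h))⟩

end IsGenericPartiteTournament

end

theorem n_star_I_infinity_distinguishing_number_two_general
    (n : ℕ) (hn : 2 ≤ n) (V : Type*) [Countable V]
    (s : V → Fin n) (R : V → V → Prop)
    (hclass : ∀ x y, R x y → s x ≠ s y)
    (htour : ∀ x y, s x ≠ s y → (R x y ↔ ¬ R y x))
    (hext : ∀ i : Fin n, ∀ A B : Finset V, Disjoint A B →
      (∀ a ∈ A, s a ≠ i) → (∀ b ∈ B, s b ≠ i) →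
      ∃ x, s x = i ∧ (∀ a ∈ A, R x a) ∧ (∀ b ∈ B, R b x)) :
    (∃ c : V → Bool, ∀ g : V ≃ V, (∀ x y, R x y ↔ R (g x) (g y)) →
        (∀ v, c (g v) = c v) → ∀ v, g v = v) ∧
    (∃ g : V ≃ V, (∀ x y, R x y ↔ R (g x) (g y)) ∧ ∃ v, g v ≠ v) := by
  have : Nontrivial (Fin n) := Fin.nontrivial_iff_two_le.mpr hn
  have G : IsGenericPartiteTournament s R := ⟨hclass, htour, hext⟩
  exact ⟨G.exists_distinguishing_coloring, G.exists_nontrivial_automorphism⟩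

/-- For finite `n ≥ 2`, the generic directed graph `n ∗ I_∞` in which
non-adjacency is an equivalence relation with `n` classes has distinguishing number 2. -/
theorem n_star_I_infinity_distinguishing_number_two
    (n : ℕ) (hn : 2 ≤ n) (V : Type*) [Countable V] [Infinite V]
    (s : V → Fin n) (hs : Function.Surjective s) (R : V → V → Prop)
    (hclass : ∀ x y, R x y → s x ≠ s y)
    (htour : ∀ x y, s x ≠ s y → (R x y ↔ ¬ R y x))
    (hext : ∀ i : Fin n, ∀ A B : Finset V, Disjoint A B →
      (∀ a ∈ A, s a ≠ i) → (∀ b ∈ B, s b ≠ i) →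
      ∃ x, s x = i ∧ (∀ a ∈ A, R x a) ∧ (∀ b ∈ B, R b x)) :
    (∃ c : V → Bool, ∀ g : V ≃ V, (∀ x y, R x y ↔ R (g x) (g y)) →
        (∀ v, c (g v) = c v) → ∀ v, g v = v) ∧
    (∃ g : V ≃ V, (∀ x y, R x y ↔ R (g x) (g y)) ∧ ∃ v, g v ≠ v) :=
  n_star_I_infinity_distinguishing_number_two_general n hn V s R hclass htour hext
end
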